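/- arXiv:2104.08839 — 10 statements merged into one kernel-verified Lean document; each statement's English description precedes it below -/
import Mathlib

section
/- Let Γ be a k-regular strongly regular graph with parameters (v, k, λ, μ) and smallest adjacency eigenvalue −m (with m > 0). If S is a clique in Γ, then |S| ≤ 1 + k/m. -/
/-!
Write `A` for the adjacency matrix and `r = ℓ - μ + m` for the other root of
`x² = (k - μ) + (ℓ - μ) x`. On the orthogonal complement of the all-ones vector, the identity
`A² = k I + ℓ A + μ (J - I - A)` gives `(A + m)² = (r + m)(A + m)`, so there the quadratic form
of `A` is at most `r`. Evaluated at the projection of the indicator vector of a clique `S`, this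
reads `|S| (|V| - k + r) ≤ |V| (1 + r)`, and eliminating `|V|` and `r` through
`k (k - ℓ - 1) = (|V| - k - 1) μ` and `m r = k - μ` leaves `m |S| ≤ k + m`.
For `m ≤ 1` the trivial bound `|S| ≤ k + 1` suffices; the complete graph, the one case in which
`μ` is unconstrained, has `m = 1`.
-/

open Finset Matrix

namespace Matrix

variable {n R : Type*} [Fintype n] [Field R] [LinearOrder R] [IsStrictOrderedRing R]

-- `‖B x - t x‖² = t (t ‖x‖² - ⟪x, B x⟫)`
theorem dotProduct_mulVec_le_of_mulVec_mulVec_eq_smul {B : Matrix n n R} (hB : Bᵀ = B)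
    {t : R} (ht : 0 < t) {x : n → R} (hx : B *ᵥ B *ᵥ x = t • B *ᵥ x) :
    x ⬝ᵥ B *ᵥ x ≤ t * (x ⬝ᵥ x) := by
  set y := B *ᵥ x
  have hyy : y ⬝ᵥ y = t * (x ⬝ᵥ y) := by
    rw [← smul_eq_mul, ← dotProduct_smul, ← hx, dotProduct_mulVec, ← vecMul_transpose, hB,
      dotProduct_comm]
  have hsq : 0 ≤ (y - t • x) ⬝ᵥ (y - t • x) :=
    Finset.sum_nonneg fun i _ => mul_self_nonneg _
  have hexp : (y - t • x) ⬝ᵥ (y - t • x) = t * (t * (x ⬝ᵥ x) - x ⬝ᵥ y) := by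
    simp only [sub_dotProduct, dotProduct_sub, smul_dotProduct, dotProduct_smul, smul_eq_mul,
      hyy, dotProduct_comm y x]
    ring
  rw [hexp] at hsq
  linarith [nonneg_of_mul_nonneg_right hsq ht]

end Matrix

namespace SimpleGraph

variable {V : Type*} [Fintype V] {G : SimpleGraph V} [DecidableRel G.Adj]

theorem compl_adjMatrix_mulVec [DecidableEq V] {α : Type*} [Ring α] (x : V → α) :
    Gᶜ.adjMatrix α *ᵥ x = Function.const V (∑ i, x i) - x - G.adjMatrix α *ᵥ x := by
  classical
  have h := G.one_add_adjMatrix_add_compl_adjMatrix_eq_of_one α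
  rw [compl_adjMatrix_eq_adjMatrix_compl] at h
  rw [eq_sub_of_add_eq' h, sub_mulVec, add_mulVec, one_mulVec, ← sub_sub]
  congr
  ext i
  simp [mulVec, dotProduct]

theorem IsRegularOfDegree.sum_adjMatrix_mulVec {α : Type*} [Semiring α] {k : ℕ}
    (hG : G.IsRegularOfDegree k) (x : V → α) :
    ∑ i, (G.adjMatrix α *ᵥ x) i = k * ∑ i, x i := by
  have h := dotProduct_mulVec (Function.const V (1 : α)) (G.adjMatrix α) x
  have hdeg : Function.const V (1 : α) ᵥ* G.adjMatrix α = Function.const V (k : α) := by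
    ext j
    simp [adjMatrix_vecMul_apply, hG j]
  rw [hdeg] at h
  simpa [dotProduct, Finset.mul_sum] using h

theorem IsRegularOfDegree.sum_eq_zero_of_adjMatrix_mulVec_eq_smul {α : Type*} [CommRing α]
    [IsDomain α] {k : ℕ} (hG : G.IsRegularOfDegree k) {θ : α} {u : V → α}
    (hu : G.adjMatrix α *ᵥ u = θ • u) (hθ : θ ≠ k) : ∑ i, u i = 0 := by
  have h := hG.sum_adjMatrix_mulVec u
  simp only [hu, Pi.smul_apply, smul_eq_mul, ← Finset.mul_sum] at h
  exact (mul_eq_zero.1 (sub_mul θ k _ ▸ sub_eq_zero.2 h)).resolve_left (sub_ne_zero.2 hθ)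

theorem eq_neg_one_of_adjMatrix_mulVec_eq_smul_of_eq_top [DecidableEq V] {α : Type*}
    [CommRing α] [IsDomain α] (hG : G = ⊤) {θ : α} {u : V → α}
    (hu : G.adjMatrix α *ᵥ u = θ • u) (hu0 : u ≠ 0) (hsum : ∑ i, u i = 0) : θ = -1 := by
  have hcompl : Gᶜ.adjMatrix α = 0 := by
    ext i j
    simp [hG]
  have h := G.compl_adjMatrix_mulVec u
  rw [hcompl, zero_mulVec, hsum, Function.const_zero, zero_sub, hu] at h
  have h' : (θ + 1) • u = 0 := by linear_combination (norm := module) h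
  exact eq_neg_of_add_eq_zero_left ((smul_eq_zero_iff_left hu0).1 h')

variable {n k ℓ μ : ℕ}

section StronglyRegular

theorem IsSRGWith.mu_le_of_not_adj (h : G.IsSRGWith n k ℓ μ) {v w : V} (hne : v ≠ w)
    (hna : ¬G.Adj v w) : μ ≤ k := by
  rw [← h.of_not_adj hne hna, ← h.regular v]
  exact G.card_commonNeighbors_le_degree_left v w

variable [DecidableEq V] {α : Type*} [CommRing α]

theorem IsSRGWith.adjMatrix_mulVec_adjMatrix_mulVec (h : G.IsSRGWith n k ℓ μ) (x : V → α) :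
    G.adjMatrix α *ᵥ G.adjMatrix α *ᵥ x = (k : α) • x + (ℓ : α) • G.adjMatrix α *ᵥ x +
      (μ : α) • (Function.const V (∑ i, x i) - x - G.adjMatrix α *ᵥ x) := by
  rw [mulVec_mulVec, ← sq, h.matrix_eq, ← compl_adjMatrix_mulVec]
  simp only [add_mulVec, ← Nat.cast_smul_eq_nsmul α, smul_mulVec, one_mulVec]

theorem IsSRGWith.adjMatrix_mulVec_adjMatrix_mulVec_of_sum_eq_zero (h : G.IsSRGWith n k ℓ μ)
    {x : V → α} (hx : ∑ i, x i = 0) :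
    G.adjMatrix α *ᵥ G.adjMatrix α *ᵥ x =
      ((k : α) - μ) • x + ((ℓ : α) - μ) • G.adjMatrix α *ᵥ x := by
  rw [h.adjMatrix_mulVec_adjMatrix_mulVec, hx]
  ext i
  simp only [Pi.add_apply, Pi.sub_apply, Pi.smul_apply, smul_eq_mul, Function.const_apply]
  ring

theorem IsSRGWith.param_eq_cast [Nonempty V] (h : G.IsSRGWith n k ℓ μ) :
    (k : α) * (k - ℓ - 1) = (n - k - 1) * μ := by
  obtain ⟨i⟩ := ‹Nonempty V›
  have hconst (a : α) : G.adjMatrix α *ᵥ Function.const V a = Function.const V (k * a) :=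
    funext fun _ => adjMatrix_mulVec_const_apply_of_regular h.regular
  have := congrFun (h.adjMatrix_mulVec_adjMatrix_mulVec (Function.const V (1 : α))) i
  simp only [hconst, Pi.add_apply, Pi.sub_apply, Pi.smul_apply, Function.const_apply,
    smul_eq_mul, sum_const, card_univ, h.card, nsmul_eq_mul] at this
  linear_combination this

theorem IsSRGWith.eigenvalue_sq [IsDomain α] (h : G.IsSRGWith n k ℓ μ) {θ : α} {u : V → α}
    (hu : G.adjMatrix α *ᵥ u = θ • u) (hu0 : u ≠ 0) (hθ : θ ≠ k) :
    θ ^ 2 = (k - μ) + (ℓ - μ) * θ := by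
  have h2 := h.adjMatrix_mulVec_adjMatrix_mulVec_of_sum_eq_zero
    (h.regular.sum_eq_zero_of_adjMatrix_mulVec_eq_smul hu hθ)
  rw [hu, mulVec_smul, hu, smul_smul, smul_smul, ← add_smul, ← sq] at h2
  exact smul_left_injective α hu0 (by simpa [mul_comm] using h2)

theorem IsSRGWith.dotProduct_adjMatrix_mulVec_le {R : Type*} [Field R] [LinearOrder R]
    [IsStrictOrderedRing R] (h : G.IsSRGWith n k ℓ μ) {θ : R}
    (hθ : θ ^ 2 = (k - μ) + (ℓ - μ) * θ) (ht : 0 < ℓ - μ - 2 * θ) {x : V → R}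
    (hx : ∑ i, x i = 0) : x ⬝ᵥ G.adjMatrix R *ᵥ x ≤ (ℓ - μ - θ) * (x ⬝ᵥ x) := by
  set B := G.adjMatrix R - θ • 1
  have hB : Bᵀ = B := by simp [B]
  have hBy (y : V → R) : B *ᵥ y = G.adjMatrix R *ᵥ y - θ • y := by
    simp [B, sub_mulVec, smul_mulVec, one_mulVec]
  have hBB : B *ᵥ B *ᵥ x = (ℓ - μ - 2 * θ) • B *ᵥ x := by
    have h2 := h.adjMatrix_mulVec_adjMatrix_mulVec_of_sum_eq_zero (α := R) hx
    rw [hBy, hBy, mulVec_sub, mulVec_smul, h2]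
    ext i
    simp only [Pi.add_apply, Pi.sub_apply, Pi.smul_apply, smul_eq_mul]
    linear_combination (-x i) * hθ
  have := dotProduct_mulVec_le_of_mulVec_mulVec_eq_smul hB ht hBB
  rw [hBy, dotProduct_sub, dotProduct_smul, smul_eq_mul] at this
  linarith

end StronglyRegular

section Clique

variable [DecidableEq V] {S : Finset V}

theorem IsClique.neighborFinset_inter_eq_erase (hS : G.IsClique (S : Set V)) {i : V}
    (hi : i ∈ S) : G.neighborFinset i ∩ S = S.erase i := by
  ext j
  simp only [mem_inter, mem_neighborFinset, mem_erase]
  exact ⟨fun ⟨hij, hj⟩ => ⟨hij.ne', hj⟩, fun ⟨hji, hj⟩ => ⟨hS hi hj hji.symm, hj⟩⟩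

theorem IsClique.card_le_degree_add_one (hS : G.IsClique (S : Set V)) {i : V} (hi : i ∈ S) :
    #S ≤ G.degree i + 1 := by
  have := card_le_card (inter_subset_left (s₁ := G.neighborFinset i) (s₂ := S))
  rw [hS.neighborFinset_inter_eq_erase hi, card_erase_of_mem hi, card_neighborFinset_eq_degree]
    at this
  omega

theorem IsClique.adjMatrix_mulVec_indicator_apply {R : Type*} [NonAssocRing R]
    (hS : G.IsClique (S : Set V)) {i : V} (hi : i ∈ S) :
    (G.adjMatrix R *ᵥ (S : Set V).indicator 1) i = #S - 1 := by
  simp only [adjMatrix_mulVec_apply, Set.indicator_apply, mem_coe, Pi.one_apply]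
  rw [sum_ite_mem, hS.neighborFinset_inter_eq_erase hi, sum_const, card_erase_of_mem hi,
    nsmul_one, Nat.cast_pred (card_pos.2 ⟨i, hi⟩)]

theorem IsRegularOfDegree.card_mul_le_of_dotProduct_adjMatrix_mulVec_le {R : Type*} [Field R]
    [LinearOrder R] [IsStrictOrderedRing R] {k : ℕ} (hG : G.IsRegularOfDegree k)
    (hS : G.IsClique (S : Set V)) (hne : S.Nonempty) {r : R}
    (hr : ∀ x : V → R, ∑ i, x i = 0 → x ⬝ᵥ G.adjMatrix R *ᵥ x ≤ r * (x ⬝ᵥ x)) :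
    #S * (Fintype.card V - k + r) ≤ Fintype.card V * (1 + r) := by
  set N : R := (Fintype.card V : R)
  set c : R := (#S : R)
  set χ : V → R := (S : Set V).indicator 1
  have hχ (w : V → R) : χ ⬝ᵥ w = ∑ i ∈ S, w i := by
    simp [χ, dotProduct, Set.indicator_apply]
  -- `|V|` times the projection of `χ` onto `1ᗮ`
  set x : V → R := N • χ - Function.const V c
  have hdot (w : V → R) : x ⬝ᵥ w = N * ∑ i ∈ S, w i - c * ∑ i, w i := by
    rw [sub_dotProduct, smul_dotProduct, hχ, smul_eq_mul]
    simp [dotProduct, Finset.mul_sum]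
  have hsum : ∑ i, x i = 0 := by
    rw [← dotProduct_one, hdot]
    simp [N, c, mul_comm]
  have hAsum : ∑ i, (G.adjMatrix R *ᵥ x) i = 0 := by
    rw [hG.sum_adjMatrix_mulVec, hsum, mul_zero]
  have hAx : ∀ i ∈ S, (G.adjMatrix R *ᵥ x) i = N * (c - 1) - k * c := by
    intro i hi
    rw [mulVec_sub, mulVec_smul, Pi.sub_apply, Pi.smul_apply, smul_eq_mul,
      hS.adjMatrix_mulVec_indicator_apply hi, adjMatrix_mulVec_const_apply_of_regular hG]
  have hxAx : x ⬝ᵥ G.adjMatrix R *ᵥ x = N * c * (N * (c - 1) - k * c) := by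
    rw [hdot, hAsum, sum_congr rfl hAx, sum_const, nsmul_eq_mul]
    ring
  have hxx : x ⬝ᵥ x = N * c * (N - c) := by
    have hxS : ∀ i ∈ S, x i = N - c := by
      intro i hi
      simp [x, χ, hi]
    rw [hdot, hsum, sum_congr rfl hxS, sum_const, nsmul_eq_mul]
    ring
  have hNc : 0 < N * c := by
    have hc : 0 < #S := hne.card_pos
    exact mul_pos (Nat.cast_pos.2 (hc.trans_le (card_le_univ S))) (Nat.cast_pos.2 hc)
  have := hr x hsum
  rw [hxAx, hxx, mul_left_comm] at this
  nlinarith [le_of_mul_le_mul_left this hNc]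

theorem IsSRGWith.card_mul_le_of_isClique (h : G.IsSRGWith n k ℓ μ) (hS : G.IsClique (S : Set V))
    (hne : S.Nonempty) {m : ℝ} (hm : 0 < m) (hθ : (-m) ^ 2 = (k - μ) + (ℓ - μ) * (-m))
    (hμk : μ ≤ k) : #S * m ≤ k + m := by
  obtain ⟨a, ha⟩ := hne
  have hμk : (μ : ℝ) ≤ k := by exact_mod_cast hμk
  have hkn : (k : ℝ) + 1 ≤ n := by
    exact_mod_cast h.card ▸ h.regular a ▸ G.degree_lt_card_verts a
  have : Nonempty V := ⟨a⟩
  have hparam := h.param_eq_cast (α := ℝ)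
  have hbound := h.regular.card_mul_le_of_dotProduct_adjMatrix_mulVec_le hS ⟨a, ha⟩
    fun x hx => h.dotProduct_adjMatrix_mulVec_le hθ (by nlinarith) hx
  rw [h.card] at hbound
  set P : ℝ := m * (n - k) + (k - μ)
  have hP : 0 < P := by nlinarith
  have hcP : #S * P ≤ n * (m + k - μ) := by
    nlinarith [mul_le_mul_of_nonneg_left hbound hm.le]
  have hcm : #S * m * P ≤ (k + m) * P :=
    calc #S * m * P = m * (#S * P) := by ring
      _ ≤ m * (n * (m + k - μ)) := mul_le_mul_of_nonneg_left hcP hm.le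
      _ = (k + m) * P := by linear_combination m * hparam + k * hθ
  exact le_of_mul_le_mul_right hcm hP

end Clique

end SimpleGraph

open SimpleGraph

theorem hoffman_clique_bound_general {V : Type*} [Fintype V] [DecidableEq V]
    (G : SimpleGraph V) [DecidableRel G.Adj]
    (v k l mu : ℕ) (hSRG : G.IsSRGWith v k l mu)
    (m : ℝ) (hm : 0 < m)
    (hev : Module.End.HasEigenvalue (Matrix.toLin' (G.adjMatrix ℝ)) (-m))
    (S : Finset V) (hS : G.IsClique (S : Set V)) :
    (S.card : ℝ) ≤ 1 + (k : ℝ) / m := by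
  rcases S.eq_empty_or_nonempty with rfl | hne
  · simp only [card_empty, Nat.cast_zero]
    positivity
  obtain ⟨a, ha⟩ := hne
  rcases le_or_gt m 1 with hm1 | hm1
  · have hck : (#S : ℝ) ≤ k + 1 := by
      exact_mod_cast hSRG.regular a ▸ hS.card_le_degree_add_one ha
    linarith [le_div_self k.cast_nonneg hm hm1]
  obtain ⟨u, hu⟩ := hev.exists_hasEigenvector
  have hAu : G.adjMatrix ℝ *ᵥ u = (-m) • u := by
    simpa [Matrix.toLin'_apply] using hu.apply_eq_smul
  have hθk : -m ≠ k := ((neg_neg_of_pos hm).trans_le k.cast_nonneg).ne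
  obtain ⟨p, q, hpq, hnadj⟩ : ∃ p q, p ≠ q ∧ ¬G.Adj p q := by
    by_contra! hG
    have := eq_neg_one_of_adjMatrix_mulVec_eq_smul_of_eq_top (eq_top_iff.2 fun p q => hG p q)
      hAu hu.2 (hSRG.regular.sum_eq_zero_of_adjMatrix_mulVec_eq_smul hAu hθk)
    linarith
  have := hSRG.card_mul_le_of_isClique hS ⟨a, ha⟩ hm (hSRG.eigenvalue_sq hAu hu.2 hθk)
    (hSRG.mu_le_of_not_adj hpq hnadj)
  rw [one_add_div hm.ne', le_div_iff₀ hm]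
  linarith

/-- **Hoffman clique bound.** If `G` is a strongly regular graph with parameters
`(v, k, l, mu)` whose smallest adjacency eigenvalue is `-m` (with `m > 0`), then
any clique `S` satisfies `|S| ≤ 1 + k / m`. -/
theorem hoffman_clique_bound {V : Type*} [Fintype V] [DecidableEq V]
    (G : SimpleGraph V) [DecidableRel G.Adj]
    (v k l mu : ℕ) (hSRG : G.IsSRGWith v k l mu)
    (m : ℝ) (hm : 0 < m)
    (hev : Module.End.HasEigenvalue (Matrix.toLin' (G.adjMatrix ℝ)) (-m))
    (hmin : ∀ θ : ℝ, Module.End.HasEigenvalue (Matrix.toLin' (G.adjMatrix ℝ)) θ → -m ≤ θ)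
    (S : Finset V) (hS : G.IsClique (S : Set V)) :
    (S.card : ℝ) ≤ 1 + (k : ℝ) / m :=
  hoffman_clique_bound_general G v k l mu hSRG m hm hev S hS
end

section
/- The block graph of an orthogonal array OA(m, n) with 2 ≤ m < n + 1 is strongly regular with parameters (n², m(n−1), (m−1)(m−2) + n − 2, m(m−1)). -/
/-! Two distinct columns of an orthogonal array agree in at most one row, and for rows `r ≠ s`
exactly one column has prescribed entries in rows `r` and `s`; in particular every symbol occurs
`n` times in each row. A common neighbour `e` of distinct columns `c`, `d` either agrees with both
in a single row, which must then be the row where `c` and `d` agree (`n - 2` such `e`), or agrees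
with `c` in a row `r` and with `d` in a row `s ≠ r`. In the second case `c` and `d` differ in
rows `r` and `s`, and `e` is the column through `A r c` and `A s d`; so these `e` correspond
bijectively to the ordered pairs of distinct rows in which `c` and `d` differ. -/

/-- An orthogonal array `OA(m, n)`: an `m × n²` array with entries from an `n`-element
set such that for any two distinct rows, the columns restricted to those two rows give
all `n²` ordered pairs. -/
def IsOA (m n : ℕ) (A : Fin m → Fin (n ^ 2) → Fin n) : Prop :=
  ∀ r s : Fin m, r ≠ s → Function.Bijective (fun c => (A r c, A s c))

/-- The block graph of an `m × n²` array: vertices are the columns, two distinct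
columns being adjacent when they agree in some row. -/
def blockGraph {m n : ℕ} (A : Fin m → Fin (n ^ 2) → Fin n) : SimpleGraph (Fin (n ^ 2)) where
  Adj c d := c ≠ d ∧ ∃ r, A r c = A r d
  symm := ⟨fun c d ⟨h, r, hr⟩ => ⟨h.symm, r, hr.symm⟩⟩
  loopless := ⟨fun c ⟨h, _⟩ => h rfl⟩

instance {m n : ℕ} (A : Fin m → Fin (n ^ 2) → Fin n) : DecidableRel (blockGraph A).Adj :=
  fun c d => inferInstanceAs (Decidable (c ≠ d ∧ ∃ r, A r c = A r d))

open Finset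

theorem SimpleGraph.card_commonNeighbors_eq {V : Type*} [Fintype V] (G : SimpleGraph V)
    [DecidableRel G.Adj] (v w : V) :
    Fintype.card (G.commonNeighbors v w) = #{u | G.Adj v u ∧ G.Adj w u} := by
  rw [← Set.toFinset_card]
  congr 1
  ext u
  simp [SimpleGraph.mem_commonNeighbors]

section

variable {m n : ℕ} {A : Fin m → Fin (n ^ 2) → Fin n}

@[simp]
theorem blockGraph_adj {c d : Fin (n ^ 2)} :
    (blockGraph A).Adj c d ↔ c ≠ d ∧ ∃ r, A r c = A r d :=
  Iff.rfl

theorem neighborFinset_blockGraph (c : Fin (n ^ 2)) :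
    (blockGraph A).neighborFinset c =
      univ.biUnion fun r => ({e | A r e = A r c} : Finset _).erase c := by
  ext e
  simp [eq_comm]

namespace IsOA

theorem eq_of_agree (hA : IsOA m n A) {c d : Fin (n ^ 2)} (hcd : c ≠ d) {r s : Fin m}
    (hr : A r c = A r d) (hs : A s c = A s d) : r = s := by
  by_contra hrs
  exact hcd ((hA r s hrs).injective (Prod.ext hr hs))

noncomputable def col (hA : IsOA m n A) {r s : Fin m} (hrs : r ≠ s) (x y : Fin n) :
    Fin (n ^ 2) :=
  (Equiv.ofBijective _ (hA r s hrs)).symm (x, y)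

theorem eq_col_iff (hA : IsOA m n A) {r s : Fin m} (hrs : r ≠ s) {x y : Fin n}
    {e : Fin (n ^ 2)} : e = hA.col hrs x y ↔ A r e = x ∧ A s e = y := by
  rw [col, Equiv.eq_symm_apply, Equiv.ofBijective_apply, Prod.ext_iff]

theorem card_filter_eq (hA : IsOA m n A) (hm : 2 ≤ m) (r : Fin m) (x : Fin n) :
    #{c | A r c = x} = n := by
  have : Nontrivial (Fin m) := Fin.nontrivial_iff_two_le.mpr hm
  obtain ⟨s, hsr⟩ := exists_ne r
  have hrs := hA r s hsr.symm
  calc #{c | A r c = x} = #(univ : Finset (Fin n)) := by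
        refine card_nbij (A s) (fun _ _ => mem_univ _) (fun c hc c' hc' hcc' => ?_) fun y _ => ?_
        · simp only [mem_coe, mem_filter_univ] at hc hc'
          exact hrs.injective (Prod.ext (hc.trans hc'.symm) hcc')
        · obtain ⟨c, hc⟩ := hrs.surjective (x, y)
          simp only [Prod.ext_iff] at hc
          exact ⟨c, by simpa using hc.1, hc.2⟩
    _ = n := by simp

theorem isRegularOfDegree_blockGraph (hA : IsOA m n A) (hm : 2 ≤ m) :
    (blockGraph A).IsRegularOfDegree (m * (n - 1)) := by
  intro c
  rw [← SimpleGraph.card_neighborFinset_eq_degree, neighborFinset_blockGraph, card_biUnion]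
  · simp [card_erase_of_mem, hA.card_filter_eq hm]
  · intro r _ s _ hrs
    refine disjoint_left.2 fun e he he' => hrs ?_
    simp only [mem_erase, mem_filter_univ] at he he'
    exact hA.eq_of_agree he.1 he.2 he'.2

theorem card_commonNeighbors_without_shared_row (hA : IsOA m n A) {c d : Fin (n ^ 2)} :
    #{e | ((blockGraph A).Adj c e ∧ (blockGraph A).Adj d e) ∧
        ¬∃ r, A r e = A r c ∧ A r e = A r d} =
      #({r | A r c ≠ A r d} : Finset (Fin m)).offDiag := by
  have col_ne {r s : Fin m} (hrs : r ≠ s) (hs : A s c ≠ A s d) (hr : A r c ≠ A r d) :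
      hA.col hrs (A r c) (A s d) ≠ c ∧ hA.col hrs (A r c) (A s d) ≠ d := by
    obtain ⟨her, hes⟩ := (hA.eq_col_iff hrs).1 rfl
    exact ⟨fun h => hs (h ▸ hes), fun h => hr (h ▸ her).symm⟩
  symm
  refine card_bij (fun p hp => hA.col (mem_offDiag.1 hp).2.2 (A p.1 c) (A p.2 d)) ?_ ?_ ?_
  · rintro ⟨r, s⟩ hp
    simp only [mem_offDiag, mem_filter_univ] at hp
    obtain ⟨hr, hs, hrs⟩ := hp
    obtain ⟨hec, hed⟩ := col_ne hrs hs hr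
    obtain ⟨her, hes⟩ := (hA.eq_col_iff hrs).1 rfl
    simp only [mem_filter_univ, blockGraph_adj, not_exists, not_and]
    refine ⟨⟨⟨hec.symm, r, her.symm⟩, hed.symm, s, hes.symm⟩, fun t het hetd => hr ?_⟩
    obtain rfl := hA.eq_of_agree hec her het
    exact het.symm.trans hetd
  · rintro ⟨r, s⟩ hp ⟨r', s'⟩ hp' h
    simp only [mem_offDiag, mem_filter_univ] at hp hp'
    obtain ⟨hec, hed⟩ := col_ne hp.2.2 hp.2.1 hp.1
    obtain ⟨her, hes⟩ := (hA.eq_col_iff hp.2.2).1 rfl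
    obtain ⟨her', hes'⟩ := (hA.eq_col_iff hp'.2.2).1 h
    exact Prod.ext (hA.eq_of_agree hec her her') (hA.eq_of_agree hed hes hes')
  · intro e he
    simp only [mem_filter_univ, blockGraph_adj, not_exists, not_and] at he
    obtain ⟨⟨⟨-, r, hr⟩, -, s, hs⟩, hshared⟩ := he
    have hrd : A r c ≠ A r d := fun h => hshared r hr.symm (hr.symm.trans h)
    have hsc : A s c ≠ A s d := fun h => hshared s (hs.symm.trans h.symm) hs.symm
    have hrs : r ≠ s := by rintro rfl; exact hrd (hr.trans hs.symm)
    exact ⟨(r, s), by simp [hrd, hsc, hrs], ((hA.eq_col_iff hrs).2 ⟨hr.symm, hs.symm⟩).symm⟩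

theorem card_commonNeighbors_blockGraph (hA : IsOA m n A) (c d : Fin (n ^ 2)) :
    Fintype.card ((blockGraph A).commonNeighbors c d) =
      #{e | e ≠ c ∧ e ≠ d ∧ ∃ r, A r e = A r c ∧ A r e = A r d} +
        #({r | A r c ≠ A r d} : Finset (Fin m)).offDiag := by
  rw [SimpleGraph.card_commonNeighbors_eq, ← hA.card_commonNeighbors_without_shared_row,
    ← card_filter_add_card_filter_not (fun e => ∃ r, A r e = A r c ∧ A r e = A r d),
    filter_filter, filter_filter]
  congr 2
  ext e
  simp only [mem_filter_univ, blockGraph_adj]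
  constructor
  · rintro ⟨⟨⟨hce, -⟩, hde, -⟩, hshared⟩
    exact ⟨hce.symm, hde.symm, hshared⟩
  · rintro ⟨hec, hed, r, hrc, hrd⟩
    exact ⟨⟨⟨Ne.symm hec, r, hrc.symm⟩, Ne.symm hed, r, hrd.symm⟩, r, hrc, hrd⟩

theorem card_commonNeighbors_blockGraph_of_not_adj (hA : IsOA m n A) {c d : Fin (n ^ 2)}
    (hcd : c ≠ d) (h : ¬(blockGraph A).Adj c d) :
    Fintype.card ((blockGraph A).commonNeighbors c d) = m * (m - 1) := by
  have hdiff (r : Fin m) : A r c ≠ A r d := fun hr => h ⟨hcd, r, hr⟩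
  have hshared : ({e | e ≠ c ∧ e ≠ d ∧ ∃ r, A r e = A r c ∧ A r e = A r d} : Finset _) = ∅ :=
    filter_false_of_mem fun e _ ⟨_, _, r, hrc, hrd⟩ => hdiff r (hrc.symm.trans hrd)
  rw [hA.card_commonNeighbors_blockGraph, hshared, filter_true_of_mem fun r _ => hdiff r,
    offDiag_card, card_univ, Fintype.card_fin, Nat.mul_sub_one, card_empty, zero_add]

theorem card_commonNeighbors_blockGraph_of_adj (hA : IsOA m n A) (hm : 2 ≤ m)
    {c d : Fin (n ^ 2)} (h : (blockGraph A).Adj c d) :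
    Fintype.card ((blockGraph A).commonNeighbors c d) = (m - 1) * (m - 2) + n - 2 := by
  obtain ⟨hcd, r₀, hr₀⟩ := h
  have hdiff : ({r | A r c ≠ A r d} : Finset (Fin m)) = univ.erase r₀ := by
    ext r
    simp only [mem_filter_univ, mem_erase, mem_univ, and_true]
    exact ⟨fun hr h => hr (h ▸ hr₀), fun hr h => hr (hA.eq_of_agree hcd h hr₀)⟩
  have hshared : ({e | e ≠ c ∧ e ≠ d ∧ ∃ r, A r e = A r c ∧ A r e = A r d} : Finset _) =
      (({e | A r₀ e = A r₀ c} : Finset _).erase c).erase d := by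
    ext e
    simp only [mem_filter_univ, mem_erase]
    constructor
    · rintro ⟨hec, hed, r, hrc, hrd⟩
      obtain rfl := hA.eq_of_agree hcd (hrc.symm.trans hrd) hr₀
      exact ⟨hed, hec, hrc⟩
    · rintro ⟨hed, hec, hr₀c⟩
      exact ⟨hec, hed, r₀, hr₀c, hr₀c.trans hr₀⟩
  have hfiber : #((({e | A r₀ e = A r₀ c} : Finset _).erase c).erase d) + 2 = n := by
    have hc := card_erase_add_one (s := {e | A r₀ e = A r₀ c}) (a := c) (by simp)
    have hd := card_erase_add_one (s := ({e | A r₀ e = A r₀ c} : Finset _).erase c) (a := d)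
      (by simp [hcd.symm, hr₀])
    have := hA.card_filter_eq hm r₀ (A r₀ c)
    omega
  rw [hA.card_commonNeighbors_blockGraph, hshared, hdiff, offDiag_card,
    card_erase_of_mem (mem_univ _), card_univ, Fintype.card_fin, ← Nat.mul_sub_one,
    show m - 1 - 1 = m - 2 by omega]
  generalize #_ = k at hfiber ⊢
  omega

end IsOA

end

theorem blockGraph_isSRG_general (m n : ℕ) (hm : 2 ≤ m)
    (A : Fin m → Fin (n ^ 2) → Fin n) (hA : IsOA m n A) :
    (blockGraph A).IsSRGWith (n ^ 2) (m * (n - 1)) ((m - 1) * (m - 2) + n - 2) (m * (m - 1)) :=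
  ⟨Fintype.card_fin _, hA.isRegularOfDegree_blockGraph hm,
    fun _ _ => hA.card_commonNeighbors_blockGraph_of_adj hm,
    fun _ _ => hA.card_commonNeighbors_blockGraph_of_not_adj⟩

/-- The block graph of an orthogonal array `OA(m, n)` with `2 ≤ m < n + 1` is strongly
regular with parameters `(n², m(n−1), (m−1)(m−2) + n − 2, m(m−1))`. -/
theorem blockGraph_isSRG (m n : ℕ) (hm : 2 ≤ m) (hmn : m < n + 1)
    (A : Fin m → Fin (n ^ 2) → Fin n) (hA : IsOA m n A) :
    (blockGraph A).IsSRGWith (n ^ 2) (m * (n - 1)) ((m - 1) * (m - 2) + n - 2) (m * (m - 1)) :=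
  blockGraph_isSRG_general m n hm A hA
end

section
/- For an odd prime power q, the clique number of the Paley graph P(q²) equals q. -/
/-!
The elements of `F` fixed by `x ↦ x ^ q` form the subfield `𝔽_q`, which is closed under
subtraction because `x ↦ x ^ q` is a power of Frobenius. A nonzero `a ∈ 𝔽_q` satisfies
`a ^ (q - 1) = 1`, and `q - 1` divides `(q ^ 2 - 1) / 2`, so `a` is a square in `F` by Euler's
criterion: `𝔽_q` is a clique of size `q`.

Conversely, let `S` be a clique and `ν` a nonsquare. The map `(a, b) ↦ a - ν * b` is injective
on `S × S`: from `a - c = ν * (b - d)` with `b ≠ d`, `ν` would be a quotient of two squares.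
Hence `#S ^ 2 ≤ q ^ 2`.
-/

open Finset Polynomial

theorem Nat.sub_one_dvd_sq_div_two {q : ℕ} (hq : Odd q) : q - 1 ∣ q ^ 2 / 2 := by
  obtain ⟨t, rfl⟩ := hq
  refine ⟨t + 1, ?_⟩
  rw [show (2 * t + 1) ^ 2 = 2 * (2 * t * (t + 1)) + 1 by ring, Nat.mul_add_div two_pos]
  simp

namespace FiniteField

variable {F : Type*} [Field F] [Fintype F]

theorem isSquare_of_pow_eq_one (hF : ringChar F ≠ 2) {a : F} {m : ℕ} (ha : a ^ m = 1)
    (hm : m ∣ Fintype.card F / 2) : IsSquare a := by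
  rcases eq_or_ne a 0 with rfl | ha0
  · exact .zero
  obtain ⟨c, hc⟩ := hm
  rw [isSquare_iff hF ha0, hc, pow_mul, ha, one_pow]

theorem isSquare_of_pow_eq_self {q : ℕ} (hF : ringChar F ≠ 2) (hcard : Fintype.card F = q ^ 2)
    {a : F} (ha : a ^ q = a) : IsSquare a := by
  have hq : Odd q := by
    have := odd_card_of_char_ne_two hF
    rw [hcard] at this
    exact (Nat.odd_pow_iff two_ne_zero).1 (Nat.odd_iff.2 this)
  rcases eq_or_ne a 0 with rfl | ha0
  · exact .zero
  refine isSquare_of_pow_eq_one hF (m := q - 1) ?_ (hcard ▸ Nat.sub_one_dvd_sq_div_two hq)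
  refine mul_right_cancel₀ ha0 ?_
  rw [← pow_succ, Nat.sub_add_cancel hq.pos, ha, one_mul]

theorem card_nthRootsFinset_one [DecidableEq F] {d : ℕ} (hd : d ∣ Fintype.card F - 1) :
    #(nthRootsFinset d (1 : F)) = d := by
  rw [← Fintype.card_units] at hd
  obtain ⟨ζ, hζ⟩ : ∃ ζ : Fˣ, orderOf ζ = d := by
    have hd0 : 0 < d := Nat.pos_of_dvd_of_pos hd Fintype.card_pos
    have hcard := IsCyclic.card_orderOf_eq_totient hd
    obtain ⟨ζ, hζ⟩ := card_pos.1 (hcard ▸ Nat.totient_pos.2 hd0)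
    exact ⟨ζ, (mem_filter.1 hζ).2⟩
  exact (IsPrimitiveRoot.coe_units_iff.2 (hζ ▸ IsPrimitiveRoot.orderOf ζ)).card_nthRootsFinset

theorem card_filter_pow_eq_self [DecidableEq F] {q : ℕ} (hcard : Fintype.card F = q ^ 2) :
    #{x : F | x ^ q = x} = q := by
  have hq : 1 < q := by
    have := Fintype.one_lt_card (α := F)
    rwa [hcard, Nat.one_lt_pow_iff two_ne_zero] at this
  have hroots : ({x : F | x ^ q = x} : Finset F) = insert 0 (nthRootsFinset (q - 1) (1 : F)) := by
    ext x
    rw [mem_filter_univ, mem_insert, mem_nthRootsFinset (by omega)]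
    rcases eq_or_ne x 0 with rfl | hx
    · simp [zero_pow (by omega : q ≠ 0)]
    · rw [← Nat.sub_add_cancel hq.le, pow_succ, mul_eq_right₀ hx, or_iff_right hx,
        Nat.add_sub_cancel]
  have hdvd : q - 1 ∣ Fintype.card F - 1 := by
    simpa only [hcard, one_pow] using Nat.sub_dvd_pow_sub_pow q 1 2
  have h0 : (0 : F) ∉ nthRootsFinset (q - 1) (1 : F) :=
    fun h ↦ ne_zero_of_mem_nthRootsFinset one_ne_zero h rfl
  rw [hroots, card_insert_of_notMem h0, card_nthRootsFinset_one hdvd]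
  omega

theorem sq_card_le_of_forall_isSquare_sub {ν : F} (hν : ¬IsSquare ν) {S : Finset F}
    (hS : ∀ a ∈ S, ∀ b ∈ S, a ≠ b → IsSquare (a - b)) : #S ^ 2 ≤ Fintype.card F := by
  have hν0 : ν ≠ 0 := by rintro rfl; exact hν .zero
  rw [sq, ← card_product, ← card_univ]
  refine card_le_card_of_injOn (fun x ↦ x.1 - ν * x.2) (fun _ _ ↦ mem_coe.2 (mem_univ _)) ?_
  rintro ⟨a, b⟩ hab ⟨c, d⟩ hcd h
  simp only [coe_product, Set.mem_prod, mem_coe] at hab hcd h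
  have hbd : b = d := by
    by_contra hbd
    have hac : a - c = ν * (b - d) := by linear_combination h
    have hac_ne : a ≠ c := by
      intro hac_ne
      simp [hac_ne, hν0, sub_eq_zero, hbd] at hac
    apply hν
    have := (hS a hab.1 c hcd.1 hac_ne).div (hS b hab.2 d hcd.2 hbd)
    rwa [hac, mul_div_cancel_right₀ _ (sub_ne_zero.2 hbd)] at this
  subst hbd
  simp_all

end FiniteField

open FiniteField in
theorem paley_clique_number_general (q : ℕ) (hq : IsPrimePow q) (hodd : Odd q)
    (F : Type*) [Field F] [Fintype F] [DecidableEq F] (hF : Fintype.card F = q ^ 2)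
    (G : SimpleGraph F)
    (hG : ∀ x y : F, G.Adj x y ↔ x ≠ y ∧ IsSquare (x - y)) :
    (∃ S : Finset F, G.IsNClique q S) ∧
      ∀ (n : ℕ) (S : Finset F), G.IsNClique n S → n ≤ q := by
  obtain ⟨p, k, hp, -, rfl⟩ := hq
  have : Fact p.Prime := ⟨hp.nat_prime⟩
  have : CharP F p := charP_of_card_eq_prime_pow (hF.trans (pow_mul p k 2).symm)
  have hF2 : ringChar F ≠ 2 := by
    rw [Ne, even_card_iff_char_two, hF, ← Nat.even_iff, Nat.not_even_iff_odd]
    exact hodd.pow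
  have hclique (S : Finset F) :
      G.IsClique (S : Set F) ↔ ∀ a ∈ S, ∀ b ∈ S, a ≠ b → IsSquare (a - b) := by
    simp +contextual [SimpleGraph.IsClique, Set.Pairwise, hG]
  refine ⟨⟨({x | x ^ p ^ k = x} : Finset F), ?_, card_filter_pow_eq_self hF⟩, fun n S hS ↦ ?_⟩
  · refine (hclique _).2 fun a ha b hb _ ↦ isSquare_of_pow_eq_self hF2 hF ?_
    rw [mem_filter_univ] at ha hb
    rw [sub_pow_char_pow, ha, hb]
  · obtain ⟨ν, hν⟩ := exists_nonsquare hF2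
    have := sq_card_le_of_forall_isSquare_sub hν ((hclique S).1 hS.isClique)
    rwa [hS.card_eq, hF, Nat.pow_le_pow_iff_left two_ne_zero] at this

/-- For an odd prime power `q`, the clique number of the Paley graph `P(q²)` equals `q`:
there is a clique of size `q`, and every clique has size at most `q`. -/
theorem paley_clique_number (q : ℕ) (hq : IsPrimePow q) (hodd : Odd q)
    (F : Type*) [Field F] [Fintype F] [DecidableEq F] (hF : Fintype.card F = q ^ 2)
    (G : SimpleGraph F) [DecidableRel G.Adj]
    (hG : ∀ x y : F, G.Adj x y ↔ x ≠ y ∧ IsSquare (x - y)) :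
    (∃ S : Finset F, G.IsNClique q S) ∧
      ∀ (n : ℕ) (S : Finset F), G.IsNClique n S → n ≤ q :=
  paley_clique_number_general q hq hodd F hF G hG
end

section
/- For an odd prime power q and any a ∈ F_{q²} and any nonzero square s ∈ F_{q²}, the set a + s·F_q = {a + s·c : c ∈ F_q} is a clique of size q in the Paley graph P(q²). -/
lemma subfield_elem_isSquare (q : ℕ) (hq : IsPrimePow q) (hodd : Odd q)
    (F : Type*) [Field F] [Fintype F] (hF : Fintype.card F = q ^ 2)
    (K : Subfield F) (hK : Nat.card K = q) (x : F) (hx : x ∈ K) : IsSquare x := by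
  by_cases hx0 : x = 0
  · exact ⟨0, by simp [hx0]⟩
  have hqodd2 : Odd (q ^ 2) := hodd.pow
  have hchar : ringChar F ≠ 2 := by
    intro h2
    have h3 := FiniteField.even_card_of_char_two h2
    rw [hF] at h3
    have h4 := Nat.odd_iff.mp hqodd2
    omega
  rw [FiniteField.isSquare_iff hchar hx0, hF]
  -- x ^ (q - 1) = 1
  have : Fintype K := Fintype.ofFinite K
  have hcardK : Fintype.card K = q := by rw [← Nat.card_eq_fintype_card, hK]
  have hxK : (⟨x, hx⟩ : K) ≠ 0 := by
    simp only [ne_eq, Subtype.ext_iff]; exact hx0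
  have h1 : (⟨x, hx⟩ : K) ^ (Fintype.card K - 1) = 1 :=
    FiniteField.pow_card_sub_one_eq_one _ hxK
  rw [hcardK] at h1
  have h1' : x ^ (q - 1) = 1 := by
    have := congrArg (Subtype.val) h1
    push_cast at this
    simpa using this
  obtain ⟨k, hk⟩ := hodd
  have harith : q ^ 2 / 2 = (q - 1) * ((q + 1) / 2) := by
    subst hk
    have e1 : 2 * k + 1 - 1 = 2 * k := by omega
    have e2 : (2 * k + 1 + 1) / 2 = k + 1 := by omega
    have e3 : (2 * k + 1) ^ 2 = 2 * (2 * k * (k + 1)) + 1 := by ring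
    rw [e1, e2, e3]
    generalize 2 * k * (k + 1) = m
    omega
  rw [harith, pow_mul, h1', one_pow]

/-- For an odd prime power `q`, any `a ∈ F_{q²}` and any nonzero square `s ∈ F_{q²}`,
the quadratic line `a + s·F_q` is a clique of size `q` in the Paley graph `P(q²)`. -/
theorem paley_quadratic_line_clique (q : ℕ) (hq : IsPrimePow q) (hodd : Odd q)
    (F : Type*) [Field F] [Fintype F] [DecidableEq F] (hF : Fintype.card F = q ^ 2)
    (G : SimpleGraph F) [DecidableRel G.Adj]
    (hG : ∀ x y : F, G.Adj x y ↔ x ≠ y ∧ IsSquare (x - y))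
    (K : Subfield F) (hK : Nat.card K = q)
    (a s : F) (hs : s ≠ 0) (hsq : IsSquare s) :
    G.IsClique {x : F | ∃ c ∈ K, x = a + s * c} ∧
      ({x : F | ∃ c ∈ K, x = a + s * c} : Set F).ncard = q := by
  constructor
  · intro x hx y hy hne
    obtain ⟨c, hc, rfl⟩ := hx
    obtain ⟨c', hc', rfl⟩ := hy
    rw [hG]
    refine ⟨hne, ?_⟩
    have : a + s * c - (a + s * c') = s * (c - c') := by ring
    rw [this]
    exact hsq.mul (subfield_elem_isSquare q hq hodd F hF K hK _ (K.sub_mem hc hc'))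
  · have hset : {x : F | ∃ c ∈ K, x = a + s * c} = (fun c => a + s * c) '' (K : Set F) := by
      ext x; simp [eq_comm]
    rw [hset, Set.ncard_image_of_injective _ (fun c c' h => by
      exact mul_left_cancel₀ hs (add_left_cancel h))]
    rw [← hK]
    exact Nat.card_coe_set_eq (K : Set F) ▸ rfl
end

section
/- Let q be an odd prime power and let S be a clique of size q in the Paley graph P(q²). Then every vertex not in S has exactly (q−1)/2 neighbours in S. -/
/-!
Let `D γ` be the number of neighbours in `S` of a vertex `γ ∉ S`. Double counting with the
strongly regular parameters of the Paley graph (degree `k = (q² - 1)/2`, `λ = (q² - 5)/4` common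
neighbours per edge, both computed by quadratic character sums) gives the first two moments
of `2 D` over the `q² - q` vertices outside `S`: they are those of the constant `q - 1`.
So the variance of `2 D` vanishes and `2 D γ = q - 1` for every `γ ∉ S`.
-/

open Finset

theorem Finset.eq_of_sum_eq_of_sum_sq_eq {ι R : Type*} [CommRing R] [LinearOrder R]
    [IsStrictOrderedRing R] {s : Finset ι} {f : ι → R} {c : R} (h₁ : ∑ i ∈ s, f i = #s * c)
    (h₂ : ∑ i ∈ s, f i ^ 2 = #s * c ^ 2) {i : ι} (hi : i ∈ s) : f i = c := by
  have hvar : ∑ i ∈ s, (f i - c) ^ 2 = 0 := by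
    simp only [sub_sq, sum_add_distrib, sum_sub_distrib, ← sum_mul, ← mul_sum, sum_const,
      nsmul_eq_mul, h₁, h₂]
    ring
  have := (sum_eq_zero_iff_of_nonneg fun i _ => sq_nonneg (f i - c)).mp hvar i hi
  exact sub_eq_zero.mp (pow_eq_zero_iff two_ne_zero |>.mp this)

namespace SimpleGraph

variable {V : Type*} {G : SimpleGraph V} [DecidableRel G.Adj]

theorem IsNClique.card_filter_adj_of_mem [DecidableEq V] {S : Finset V} {s : ℕ}
    (hS : G.IsNClique s S) {v : V} (hv : v ∈ S) : #{a ∈ S | G.Adj v a} = s - 1 := by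
  rw [← hS.card_eq, ← card_erase_of_mem hv]
  congr 1
  ext a
  simp only [mem_filter, mem_erase]
  exact ⟨fun ⟨ha, hva⟩ => ⟨hva.ne', ha⟩, fun ⟨hav, ha⟩ => ⟨ha, hS.isClique hv ha hav.symm⟩⟩

variable [Fintype V] (G)

theorem card_commonNeighbors_eq_card_filter (v w : V) :
    Fintype.card (G.commonNeighbors v w) = #{x | G.Adj v x ∧ G.Adj w x} := by
  rw [Fintype.card_subtype]
  simp only [mem_commonNeighbors]

theorem sum_card_filter_adj (S : Finset V) :
    ∑ v, #{a ∈ S | G.Adj v a} = ∑ a ∈ S, G.degree a := by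
  simp_rw [card_filter]
  rw [sum_comm]
  refine sum_congr rfl fun a _ => ?_
  rw [← card_neighborFinset_eq_degree, neighborFinset_eq_filter, card_filter]
  simp_rw [G.adj_comm a]

theorem sum_card_filter_adj_sq (S : Finset V) :
    ∑ v, #{a ∈ S | G.Adj v a} ^ 2 = ∑ a ∈ S, ∑ b ∈ S, #{v | G.Adj a v ∧ G.Adj b v} := by
  simp_rw [card_filter, sq, sum_mul_sum, ite_zero_mul_ite_zero, mul_one]
  rw [sum_comm]
  refine sum_congr rfl fun a _ => ?_
  rw [sum_comm]
  refine sum_congr rfl fun b _ => ?_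
  simp only [G.adj_comm a, G.adj_comm b]

variable {G} [DecidableEq V] {S : Finset V} {s k ℓ : ℕ}

theorem IsNClique.sum_compl_card_filter_adj (hreg : G.IsRegularOfDegree k)
    (hS : G.IsNClique s S) : ∑ v ∈ Sᶜ, #{a ∈ S | G.Adj v a} + s * (s - 1) = s * k := by
  have := sum_compl_add_sum S fun v => #{a ∈ S | G.Adj v a}
  rwa [sum_card_filter_adj, sum_congr rfl fun v hv => hS.card_filter_adj_of_mem hv,
    sum_congr rfl fun a _ => hreg a, sum_const, sum_const, hS.card_eq, smul_eq_mul,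
    smul_eq_mul] at this

theorem IsNClique.sum_compl_card_filter_adj_sq (hreg : G.IsRegularOfDegree k)
    (hℓ : ∀ v w, G.Adj v w → Fintype.card (G.commonNeighbors v w) = ℓ) (hS : G.IsNClique s S) :
    ∑ v ∈ Sᶜ, #{a ∈ S | G.Adj v a} ^ 2 + s * (s - 1) ^ 2 = s * (k + (s - 1) * ℓ) := by
  have hrow : ∀ a ∈ S, ∑ b ∈ S, #{v | G.Adj a v ∧ G.Adj b v} = k + (s - 1) * ℓ := by
    intro a ha
    have hoff : ∀ b ∈ S.erase a, #{v | G.Adj a v ∧ G.Adj b v} = ℓ := fun b hb => by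
      rw [← card_commonNeighbors_eq_card_filter,
        hℓ a b (hS.isClique ha (mem_of_mem_erase hb) (ne_of_mem_erase hb).symm)]
    rw [← add_sum_erase _ _ ha, sum_congr rfl hoff, sum_const, card_erase_of_mem ha, hS.card_eq,
      smul_eq_mul]
    simp only [and_self]
    rw [← neighborFinset_eq_filter, card_neighborFinset_eq_degree, hreg a]
  have := sum_compl_add_sum S fun v => #{a ∈ S | G.Adj v a} ^ 2
  rwa [sum_card_filter_adj_sq, sum_congr rfl hrow,
    sum_congr rfl fun v hv => congrArg (· ^ 2) (hS.card_filter_adj_of_mem hv), sum_const,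
    sum_const, hS.card_eq, smul_eq_mul, smul_eq_mul] at this

end SimpleGraph

section Paley

variable {F : Type*} [Field F] [Fintype F] [DecidableEq F]

theorem quadraticChar_sum_sub_eq_zero (hF : ringChar F ≠ 2) (a : F) :
    ∑ x : F, quadraticChar F (x - a) = 0 :=
  (Fintype.sum_equiv (Equiv.subRight a) _ _ fun _ => rfl).trans (quadraticChar_sum_zero hF)

theorem quadraticChar_sum_sub_mul_sub_eq_neg_one (hF : ringChar F ≠ 2) {a b : F} (hab : a ≠ b) :
    ∑ x : F, quadraticChar F ((x - a) * (x - b)) = -1 := by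
  -- For `x ≠ a`, `(x - a) (x - b) = (x - a)² e x` with `e x = 1 + (a - b) / (x - a)` a
  -- permutation of `F`; at `x = a` the two summands differ by `χ (e a) = χ 1 = 1`.
  let e : Equiv.Perm F := (Equiv.subRight a).trans <| (Equiv.inv F).trans <|
    (Equiv.mulLeft₀ (a - b) (sub_ne_zero.mpr hab)).trans (Equiv.addLeft 1)
  have he : ∑ x : F, quadraticChar F (e x) = 0 :=
    (Fintype.sum_equiv e _ _ fun _ => rfl).trans (quadraticChar_sum_zero hF)
  have hdiff : ∑ x : F, (quadraticChar F (e x) - quadraticChar F ((x - a) * (x - b))) = 1 := by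
    rw [Fintype.sum_eq_single a fun x hx => ?_]
    · simp [e]
    have hxa : x - a ≠ 0 := sub_ne_zero.mpr hx
    have : (x - a) * (x - b) = (x - a) ^ 2 * e x := by
      simp only [e, Equiv.trans_apply, Equiv.subRight_apply, Equiv.inv_apply,
        Equiv.mulLeft₀_apply, Equiv.coe_addLeft]
      field_simp
      ring
    rw [this, map_mul, quadraticChar_sq_one' hxa, one_mul, sub_self]
  rw [sum_sub_distrib, he] at hdiff
  linarith

variable {G : SimpleGraph F} [DecidableRel G.Adj]

theorem one_add_quadraticChar_sub_eq_ite_adj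
    (hG : ∀ x y : F, G.Adj x y ↔ x ≠ y ∧ IsSquare (x - y)) {x a : F} (hxa : x ≠ a) :
    1 + quadraticChar F (x - a) = if G.Adj x a then 2 else 0 := by
  have hx : x - a ≠ 0 := sub_ne_zero.mpr hxa
  by_cases hsq : IsSquare (x - a)
  · rw [(quadraticChar_one_iff_isSquare hx).mpr hsq, if_pos ((hG x a).mpr ⟨hxa, hsq⟩)]
    rfl
  · rw [quadraticChar_neg_one_iff_not_isSquare.mpr hsq, if_neg fun h => hsq ((hG x a).mp h).2]
    rfl

theorem two_mul_degree_add_one_of_paley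
    (hG : ∀ x y : F, G.Adj x y ↔ x ≠ y ∧ IsSquare (x - y)) (hF : ringChar F ≠ 2) (a : F) :
    2 * G.degree a + 1 = Fintype.card F := by
  have hdiff : ∑ x : F, (1 + quadraticChar F (x - a) - 2 * if G.Adj x a then 1 else 0) = 1 := by
    rw [Fintype.sum_eq_single a fun x hx => ?_]
    · simp
    rw [one_add_quadraticChar_sub_eq_ite_adj hG hx]
    split_ifs <;> rfl
  rw [sum_sub_distrib, sum_add_distrib, quadraticChar_sum_sub_eq_zero hF, ← mul_sum,
    sum_boole] at hdiff
  simp only [sum_const, card_univ, nsmul_eq_mul, mul_one, add_zero] at hdiff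
  rw [← SimpleGraph.card_neighborFinset_eq_degree, SimpleGraph.neighborFinset_eq_filter]
  simp_rw [G.adj_comm a]
  omega

theorem four_mul_card_commonNeighbors_add_five_of_paley
    (hG : ∀ x y : F, G.Adj x y ↔ x ≠ y ∧ IsSquare (x - y)) (hF : ringChar F ≠ 2) {a b : F}
    (hab : G.Adj a b) : 4 * Fintype.card (G.commonNeighbors a b) + 5 = Fintype.card F := by
  have hχab : quadraticChar F (a - b) = 1 :=
    (quadraticChar_one_iff_isSquare (sub_ne_zero.mpr hab.ne)).mpr ((hG a b).mp hab).2
  have hχba : quadraticChar F (b - a) = 1 :=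
    (quadraticChar_one_iff_isSquare (sub_ne_zero.mpr hab.ne')).mpr ((hG b a).mp hab.symm).2
  have hdiff : ∑ x : F, ((1 + quadraticChar F (x - a)) * (1 + quadraticChar F (x - b))
      - 4 * if G.Adj x a ∧ G.Adj x b then 1 else 0) = 4 := by
    rw [Fintype.sum_eq_add a b hab.ne fun x ⟨hxa, hxb⟩ => ?_]
    · simp [hχab, hχba]
    rw [one_add_quadraticChar_sub_eq_ite_adj hG hxa, one_add_quadraticChar_sub_eq_ite_adj hG hxb]
    split_ifs <;> simp_all
  have hexpand : ∀ x, (1 + quadraticChar F (x - a)) * (1 + quadraticChar F (x - b)) =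
      1 + quadraticChar F (x - a) + quadraticChar F (x - b)
        + quadraticChar F ((x - a) * (x - b)) := by
    intro x
    rw [map_mul]
    ring
  simp only [hexpand, sum_sub_distrib, sum_add_distrib, quadraticChar_sum_sub_eq_zero hF,
    quadraticChar_sum_sub_mul_sub_eq_neg_one hF hab.ne, ← mul_sum, sum_boole, sum_const,
    card_univ, nsmul_eq_mul, mul_one, add_zero] at hdiff
  rw [SimpleGraph.card_commonNeighbors_eq_card_filter]
  simp only [G.adj_comm a, G.adj_comm b]
  omega

theorem isRegularOfDegree_of_paley (hG : ∀ x y : F, G.Adj x y ↔ x ≠ y ∧ IsSquare (x - y))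
    (hF : ringChar F ≠ 2) : G.IsRegularOfDegree ((Fintype.card F - 1) / 2) := fun a => by
  have := two_mul_degree_add_one_of_paley hG hF a
  omega

theorem card_commonNeighbors_of_paley (hG : ∀ x y : F, G.Adj x y ↔ x ≠ y ∧ IsSquare (x - y))
    (hF : ringChar F ≠ 2) {a b : F} (hab : G.Adj a b) :
    Fintype.card (G.commonNeighbors a b) = (Fintype.card F - 5) / 4 := by
  have := four_mul_card_commonNeighbors_add_five_of_paley hG hF hab
  omega

end Paley

theorem paley_q_clique_regular_general (q : ℕ) (hodd : Odd q)
    (F : Type*) [Field F] [Fintype F] (hF : Fintype.card F = q ^ 2)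
    (G : SimpleGraph F) [DecidableRel G.Adj]
    (hG : ∀ x y : F, G.Adj x y ↔ x ≠ y ∧ IsSquare (x - y))
    (S : Finset F) (hS : G.IsNClique q S) :
    ∀ γ : F, γ ∉ S → (S.filter (fun y => G.Adj γ y)).card = (q - 1) / 2 := by
  classical
  have hq4 : q ^ 2 % 4 = 1 := by obtain ⟨m, rfl⟩ := hodd; ring_nf; omega
  have hq1 : 1 < q ^ 2 := hF ▸ Fintype.one_lt_card
  have hchar : ringChar F ≠ 2 := fun h => by have := FiniteField.even_card_of_char_two h; omega
  have hreg := isRegularOfDegree_of_paley hG hchar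
  have h₁ := hS.sum_compl_card_filter_adj hreg
  have h₂ := hS.sum_compl_card_filter_adj_sq hreg fun _ _ => card_commonNeighbors_of_paley hG hchar
  have hcompl : #Sᶜ + q = q ^ 2 := by rw [← hF, ← hS.card_eq, card_compl_add_card]
  rw [hF] at h₁ h₂
  -- `q² ≡ 1 (mod 4)` and `q² > 1` make the truncated ℕ divisions below exact.
  have hk : 2 * ((q ^ 2 - 1) / 2) + 1 = q ^ 2 := by omega
  have hℓ : 4 * ((q ^ 2 - 5) / 4) + 5 = q ^ 2 := by omega
  generalize (q ^ 2 - 1) / 2 = k at h₁ h₂ hk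
  generalize (q ^ 2 - 5) / 4 = ℓ at h₂ hℓ
  zify [hodd.pos] at h₁ h₂ hk hℓ hcompl
  intro γ hγ
  have h2D := Finset.eq_of_sum_eq_of_sum_sq_eq (s := Sᶜ)
    (f := fun v => (2 * #{a ∈ S | G.Adj v a} : ℤ)) (c := q - 1) ?_ ?_ (mem_compl.mpr hγ)
  · omega
  · rw [← mul_sum]
    linear_combination 2 * h₁ + q * hk - (q - 1) * hcompl
  · simp only [mul_pow, ← mul_sum]
    linear_combination 4 * h₂ + 2 * q * hk + q * (q - 1) * hℓ - (q - 1) ^ 2 * hcompl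

/-- Let `q` be an odd prime power and `S` a clique of size `q` in the Paley graph
`P(q²)`. Then every vertex not in `S` has exactly `(q−1)/2` neighbours in `S`. -/
theorem paley_q_clique_regular (q : ℕ) (hq : IsPrimePow q) (hodd : Odd q)
    (F : Type*) [Field F] [Fintype F] [DecidableEq F] (hF : Fintype.card F = q ^ 2)
    (G : SimpleGraph F) [DecidableRel G.Adj]
    (hG : ∀ x y : F, G.Adj x y ↔ x ≠ y ∧ IsSquare (x - y))
    (S : Finset F) (hS : G.IsNClique q S) :
    ∀ γ : F, γ ∉ S → (S.filter (fun y => G.Adj γ y)).card = (q - 1) / 2 :=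
  paley_q_clique_regular_general q hodd F hF G hG S hS
end

section
/- Let q be an odd prime power and S a clique of size q in the Paley graph P(q²). Then the balanced characteristic vector of S, i.e. the function f_S with f_S(γ) = (q−1)/q for γ ∈ S and f_S(γ) = −1/q otherwise, is an eigenvector of the adjacency matrix of P(q²) with eigenvalue (−1+q)/2. -/
/-!
Let `χ` be the quadratic character of `F` and `Q x y = χ (x - y)`. Adjacency in the Paley graph
reads `2 A = J - I + Q`, and the balanced vector `f = 1_S - 1/q` satisfies `J f = 0`, so it
suffices that `Q f = q f`, i.e. that `T γ = ∑ s ∈ S, χ (γ - s)` equals `q - 1` on `S` and `-1`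
off `S`. On `S` this is the clique property. Off `S` it is a second-moment argument: the
character sums `∑ γ, χ (γ - s) χ (γ - t)` give `∑ γ, T γ = 0` and `∑ γ, T γ ^ 2 = q ^ 2 (q - 1)`,
so on the `q ^ 2 - q` points off `S` the values of `T` have mean `-1` and mean square `1`.
-/

open Finset Matrix

theorem Finset.eq_neg_one_of_sum_eq_neg_card_of_sum_sq_eq_card {ι R : Type*} [CommRing R]
    [LinearOrder R] [IsStrictOrderedRing R] {U : Finset ι} {T : ι → R}
    (hsum : ∑ i ∈ U, T i = -#U) (hsq : ∑ i ∈ U, T i ^ 2 = #U) : ∀ i ∈ U, T i = -1 := by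
  have hzero : ∑ i ∈ U, (T i + 1) ^ 2 = 0 := by
    simp only [add_sq, sum_add_distrib, ← mul_sum, hsum, hsq, mul_one, one_pow, sum_const,
      nsmul_one]
    ring
  intro i hi
  have := (sum_eq_zero_iff_of_nonneg fun j _ ↦ sq_nonneg (T j + 1)).mp hzero i hi
  linear_combination pow_eq_zero_iff two_ne_zero |>.mp this

noncomputable def balancedCharVec {α : Type*} [DecidableEq α] (q : ℕ) (S : Finset α) : α → ℝ :=
  fun u ↦ (if u ∈ S then 1 else 0) - 1 / q

section

variable {F : Type*} [Field F] [Fintype F] [DecidableEq F]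

local notation "χ" => quadraticChar F

theorem quadraticChar_sum_mul_add (hF : ringChar F ≠ 2) {c : F} (hc : c ≠ 0) :
    ∑ x, χ x * χ (x + c) = -1 := by
  have hJ := jacobiSum_nontrivial_inv (quadraticChar_ne_one hF)
  rw [(quadraticChar_isQuadratic F).inv, jacobiSum] at hJ
  -- substituting `x = -c y` turns the sum into `χ (-1) χ(c)² J(χ, χ)`
  rw [← Equiv.sum_comp (Equiv.mulLeft₀ (-c) (neg_ne_zero.mpr hc))]
  calc ∑ y, χ (-c * y) * χ (-c * y + c) = ∑ y, χ (-1) * χ c ^ 2 * (χ y * χ (1 - y)) := by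
        refine sum_congr rfl fun y _ ↦ ?_
        rw [show -c * y + c = c * (1 - y) by ring, show -c = -1 * c by ring]
        simp only [map_mul]
        ring
    _ = -1 := by
        rw [← mul_sum, hJ, quadraticChar_sq_one hc, mul_one, mul_neg, ← sq,
          quadraticChar_sq_one (neg_ne_zero.mpr one_ne_zero)]

theorem quadraticChar_sum_sq : ∑ x, χ x ^ 2 = Fintype.card F - 1 := by
  rw [← sum_erase_add _ _ (mem_univ 0), quadraticChar_zero,
    sum_congr rfl fun x hx ↦ quadraticChar_sq_one (ne_of_mem_erase hx), sum_const,
    card_erase_of_mem (mem_univ 0), card_univ, nsmul_one, Nat.cast_pred Fintype.card_pos]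
  ring

theorem quadraticChar_sum_sub_mul_sub (hF : ringChar F ≠ 2) (s t : F) :
    ∑ γ, χ (γ - s) * χ (γ - t) = if s = t then (Fintype.card F : ℤ) - 1 else -1 := by
  rw [← Equiv.sum_comp (Equiv.addRight t)]
  simp only [Equiv.coe_addRight, add_sub_cancel_right, add_sub_assoc, mul_comm (χ (_ + _))]
  split_ifs with hst
  · simp only [hst, sub_self, add_zero, ← sq, quadraticChar_sum_sq]
  · exact quadraticChar_sum_mul_add hF (sub_ne_zero.mpr (Ne.symm hst))

theorem quadraticChar_sum_sum_sub (hF : ringChar F ≠ 2) (S : Finset F) :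
    ∑ γ, ∑ s ∈ S, χ (γ - s) = 0 := by
  rw [sum_comm]
  exact sum_eq_zero fun s _ ↦
    (Equiv.sum_comp (Equiv.subRight s) _).trans (quadraticChar_sum_zero hF)

theorem quadraticChar_sum_sq_sum_sub (hF : ringChar F ≠ 2) (S : Finset F) :
    ∑ γ, (∑ s ∈ S, χ (γ - s)) ^ 2 = #S * Fintype.card F - #S ^ 2 := by
  have hrow : ∀ s ∈ S, (∑ t ∈ S, if s = t then (Fintype.card F : ℤ) - 1 else -1) =
      Fintype.card F - #S := by
    intro s hs
    simp [sum_ite, filter_eq, filter_ne, hs, Nat.cast_pred (card_pos.mpr ⟨s, hs⟩)]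
  simp only [sq, sum_mul_sum]
  rw [sum_comm]
  simp only [sum_comm (γ := F) (s := univ), quadraticChar_sum_sub_mul_sub hF]
  rw [sum_congr rfl hrow, sum_const, nsmul_eq_mul]
  ring

variable {G : SimpleGraph F}

theorem quadraticChar_sub_of_adj (hG : ∀ x y : F, G.Adj x y ↔ x ≠ y ∧ IsSquare (x - y))
    {x y : F} (h : G.Adj x y) : χ (x - y) = 1 :=
  let ⟨hne, hsq⟩ := (hG x y).mp h
  (quadraticChar_one_iff_isSquare (sub_ne_zero.mpr hne)).mpr hsq

theorem two_mul_adjMatrix_apply {R : Type*} [CommRing R] [DecidableRel G.Adj]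
    (hG : ∀ x y : F, G.Adj x y ↔ x ≠ y ∧ IsSquare (x - y)) (x y : F) :
    2 * G.adjMatrix R x y = 1 - (1 : Matrix F F R) x y + χ (x - y) := by
  by_cases hadj : G.Adj x y
  · simp [hadj, G.ne_of_adj hadj, quadraticChar_sub_of_adj hG hadj, one_add_one_eq_two]
  by_cases hxy : x = y
  · subst hxy
    simp
  · have hχ : χ (x - y) = -1 :=
      quadraticChar_neg_one_iff_not_isSquare.mpr fun hsq ↦ hadj ((hG x y).mpr ⟨hxy, hsq⟩)
    simp [hadj, hxy, hχ]

theorem two_mul_adjMatrix_mulVec_apply {R : Type*} [CommRing R] [DecidableRel G.Adj]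
    (hG : ∀ x y : F, G.Adj x y ↔ x ≠ y ∧ IsSquare (x - y)) (v : F → R) (γ : F) :
    2 * (G.adjMatrix R *ᵥ v) γ = ∑ u, v u - v γ + ∑ u, (χ (γ - u) : R) * v u := by
  simp only [Matrix.mulVec, dotProduct, mul_sum, ← mul_assoc, two_mul_adjMatrix_apply hG,
    add_mul, sub_mul, sum_add_distrib, sum_sub_distrib, one_mul, Matrix.one_apply, ite_mul,
    zero_mul, sum_ite_eq, mem_univ, if_true]

theorem SimpleGraph.IsClique.sum_quadraticChar_sub_of_mem {S : Finset F} (hS : G.IsClique S)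
    (hG : ∀ x y : F, G.Adj x y ↔ x ≠ y ∧ IsSquare (x - y)) {γ : F} (hγ : γ ∈ S) :
    ∑ s ∈ S, χ (γ - s) = #S - 1 := by
  rw [← sum_erase_add _ _ hγ, sub_self, quadraticChar_zero, add_zero,
    sum_congr rfl fun s hs ↦ quadraticChar_sub_of_adj hG
      (hS hγ (mem_of_mem_erase hs) (ne_of_mem_erase hs).symm),
    sum_const, card_erase_of_mem hγ, nsmul_one, Nat.cast_pred (card_pos.mpr ⟨γ, hγ⟩)]

/-- Equivalently, a vertex outside a `q`-clique `S` of `P(q²)` has `(q - 1) / 2` neighbours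
in `S`. -/
theorem SimpleGraph.IsNClique.sum_quadraticChar_sub_of_notMem {q : ℕ} {S : Finset F}
    (hS : G.IsNClique q S) (hF : ringChar F ≠ 2)
    (hG : ∀ x y : F, G.Adj x y ↔ x ≠ y ∧ IsSquare (x - y))
    (hcard : Fintype.card F = q ^ 2) {γ : F} (hγ : γ ∉ S) :
    ∑ s ∈ S, χ (γ - s) = -1 := by
  have hin : ∀ γ ∈ S, ∑ s ∈ S, χ (γ - s) = q - 1 := fun γ hγ ↦ by
    rw [hS.isClique.sum_quadraticChar_sub_of_mem hG hγ, hS.card_eq]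
  have hin_sq : ∀ γ ∈ S, (∑ s ∈ S, χ (γ - s)) ^ 2 = (q - 1) ^ 2 := fun γ hγ ↦ by rw [hin γ hγ]
  have hcompl : (#Sᶜ : ℤ) = q ^ 2 - q := by
    rw [card_compl, hcard, hS.card_eq, Nat.cast_sub (Nat.le_self_pow two_ne_zero q)]
    push_cast
    rfl
  refine eq_neg_one_of_sum_eq_neg_card_of_sum_sq_eq_card (U := Sᶜ)
    (T := fun γ ↦ ∑ s ∈ S, χ (γ - s)) ?_ ?_ γ (mem_compl.mpr hγ)
  · have h := sum_compl_add_sum S fun γ ↦ ∑ s ∈ S, χ (γ - s)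
    rw [quadraticChar_sum_sum_sub hF, sum_congr rfl hin, sum_const, hS.card_eq,
      nsmul_eq_mul] at h
    rw [hcompl]
    linear_combination h
  · have h := sum_compl_add_sum S fun γ ↦ (∑ s ∈ S, χ (γ - s)) ^ 2
    rw [quadraticChar_sum_sq_sum_sub hF, sum_congr rfl hin_sq, sum_const, hS.card_eq,
      nsmul_eq_mul, hcard] at h
    rw [hcompl]
    push_cast at h
    linear_combination h

theorem SimpleGraph.IsNClique.sum_quadraticChar_sub_mul_balancedCharVec {q : ℕ} {S : Finset F}
    (hS : G.IsNClique q S) (hF : ringChar F ≠ 2)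
    (hG : ∀ x y : F, G.Adj x y ↔ x ≠ y ∧ IsSquare (x - y))
    (hcard : Fintype.card F = q ^ 2) (γ : F) :
    ∑ u, (χ (γ - u) : ℝ) * balancedCharVec q S u = q * balancedCharVec q S γ := by
  have hq : (q : ℝ) ≠ 0 := Nat.cast_ne_zero.mpr fun hq ↦
    Fintype.card_ne_zero (hcard.trans (by rw [hq, zero_pow two_ne_zero]))
  have hχ : ∑ u, (χ (γ - u) : ℝ) = 0 := by
    exact_mod_cast (Equiv.sum_comp (Equiv.subLeft γ) _).trans (quadraticChar_sum_zero hF)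
  simp only [balancedCharVec, mul_sub, mul_ite, mul_one, mul_zero, sum_sub_distrib,
    sum_ite_mem_eq, ← sum_mul, hχ, ← Int.cast_sum, zero_mul, sub_zero, mul_one_div_cancel hq]
  split_ifs with hγ
  · rw [hS.isClique.sum_quadraticChar_sub_of_mem hG hγ, hS.card_eq]
    push_cast
    rfl
  · rw [hS.sum_quadraticChar_sub_of_notMem hF hG hcard hγ]
    simp

theorem SimpleGraph.IsNClique.adjMatrix_mulVec_balancedCharVec [DecidableRel G.Adj] {q : ℕ}
    {S : Finset F} (hS : G.IsNClique q S) (hF : ringChar F ≠ 2)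
    (hG : ∀ x y : F, G.Adj x y ↔ x ≠ y ∧ IsSquare (x - y))
    (hcard : Fintype.card F = q ^ 2) :
    G.adjMatrix ℝ *ᵥ balancedCharVec q S = ((-1 + (q : ℝ)) / 2) • balancedCharVec q S := by
  have hsum : ∑ u, balancedCharVec q S u = 0 := by
    simp only [balancedCharVec, sum_sub_distrib, sum_boole, filter_univ_mem, hS.card_eq,
      sum_const, card_univ, hcard, nsmul_eq_mul]
    rcases Nat.eq_zero_or_pos q with rfl | hq
    · simp
    · field_simp
      push_cast
      ring
  funext γ
  have h := two_mul_adjMatrix_mulVec_apply hG (balancedCharVec q S) γ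
  rw [hsum, hS.sum_quadraticChar_sub_mul_balancedCharVec hF hG hcard γ] at h
  rw [Pi.smul_apply, smul_eq_mul]
  linarith

end

theorem paley_balanced_char_vec_eigenvector_general (q : ℕ) (hodd : Odd q)
    (F : Type*) [Field F] [Fintype F] [DecidableEq F] (hF : Fintype.card F = q ^ 2)
    (G : SimpleGraph F) [DecidableRel G.Adj]
    (hG : ∀ x y : F, G.Adj x y ↔ x ≠ y ∧ IsSquare (x - y))
    (S : Finset F) (hS : G.IsNClique q S)
    (f : F → ℝ) (hf : ∀ γ, f γ = if γ ∈ S then ((q : ℝ) - 1) / q else -1 / q) :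
    f ≠ 0 ∧ (G.adjMatrix ℝ).mulVec f = ((-1 + (q : ℝ)) / 2) • f := by
  have hchar : ringChar F ≠ 2 := by
    rw [Ne, FiniteField.even_card_iff_char_two, hF, ← Nat.even_iff, Nat.not_even_iff_odd]
    exact hodd.pow
  have hq1 : 1 < q := (Nat.one_lt_pow_iff two_ne_zero).mp (hF ▸ Fintype.one_lt_card)
  have hq : (q : ℝ) ≠ 0 := Nat.cast_ne_zero.mpr (by omega)
  have hf_eq : f = balancedCharVec q S := funext fun γ ↦ by
    rw [hf, balancedCharVec]
    split_ifs
    · field_simp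
    · rw [zero_sub, neg_div]
  refine ⟨fun h0 ↦ ?_, hf_eq ▸ hS.adjMatrix_mulVec_balancedCharVec hchar hG hF⟩
  obtain ⟨s, hs⟩ : S.Nonempty := card_pos.mp (hS.card_eq ▸ by omega)
  have hfs := congrFun h0 s
  rw [hf, if_pos hs, Pi.zero_apply, div_eq_zero_iff, sub_eq_zero] at hfs
  exact hfs.elim (fun h ↦ hq1.ne' (by exact_mod_cast h)) hq

/-- Let `q` be an odd prime power and `S` a clique of size `q` in the Paley graph
`P(q²)`. Then the balanced characteristic vector of `S` (equal to `(q−1)/q` on `S`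
and `−1/q` elsewhere) is an eigenvector of the adjacency matrix of `P(q²)` with
eigenvalue `(−1+q)/2`. -/
theorem paley_balanced_char_vec_eigenvector (q : ℕ) (hq : IsPrimePow q) (hodd : Odd q)
    (F : Type*) [Field F] [Fintype F] [DecidableEq F] (hF : Fintype.card F = q ^ 2)
    (G : SimpleGraph F) [DecidableRel G.Adj]
    (hG : ∀ x y : F, G.Adj x y ↔ x ≠ y ∧ IsSquare (x - y))
    (S : Finset F) (hS : G.IsNClique q S)
    (f : F → ℝ) (hf : ∀ γ, f γ = if γ ∈ S then ((q : ℝ) - 1) / q else -1 / q) :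
    f ≠ 0 ∧ (G.adjMatrix ℝ).mulVec f = ((-1 + (q : ℝ)) / 2) • f :=
  paley_balanced_char_vec_eigenvector_general q hodd F hF G hG S hS f hf
end

section
/- For an odd prime power q, the Paley graph P(q²) is isomorphic to the block graph of an orthogonal array OA((q+1)/2, q). -/
/-!
Let `K = 𝔽_q` be the subfield of `F = 𝔽_{q²}` fixed by `x ↦ x ^ q`, and `g` a generator of `Fˣ`.
Since `Kˣ` is the subgroup of index `q + 1`, `g ^ n ∈ K` iff `q + 1 ∣ n`. Hence the `K`-lines
`K • g ^ (2r)`, `0 ≤ r < (q + 1) / 2`, meet pairwise only in `0`, and their nonzero points are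
exactly the even powers of `g`, i.e. the nonzero squares. The cosets of each line form a parallel
class; taking these classes as the rows, two rows are transversal because their lines meet only in
`0`, and two points share a coset iff their difference is a nonzero square.
-/

section CosetArray

variable {V : Type*} [AddCommGroup V] [Finite V] {m n : ℕ}

theorem natCard_quotient_eq_of_natCard_eq_sq {L : AddSubgroup V} (hV : Nat.card V = n ^ 2)
    (hL : Nat.card L = n) : Nat.card (V ⧸ L) = n := by
  have hn : 0 < n :=
    Nat.pos_of_ne_zero fun h => Nat.card_pos.ne' (by rw [hV, h, zero_pow two_ne_zero])
  have h := L.card_mul_index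
  rw [hV, hL, sq] at h
  exact Nat.eq_of_mul_eq_mul_left hn h

noncomputable def cosetArray (e : V ≃ Fin (n ^ 2)) (L : Fin m → AddSubgroup V)
    (hL : ∀ r, Nat.card (V ⧸ L r) = n) : Fin m → Fin (n ^ 2) → Fin n :=
  fun r c => Finite.equivFinOfCardEq (hL r) (e.symm c)

variable (e : V ≃ Fin (n ^ 2)) {L : Fin m → AddSubgroup V} (hL : ∀ r, Nat.card (V ⧸ L r) = n)

theorem cosetArray_eq_iff {r : Fin m} {c d : Fin (n ^ 2)} :
    cosetArray e L hL r c = cosetArray e L hL r d ↔ e.symm c - e.symm d ∈ L r :=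
  (Finite.equivFinOfCardEq (hL r)).injective.eq_iff.trans QuotientAddGroup.eq_iff_sub_mem

theorem isOA_cosetArray (hL_disj : Pairwise fun r t => Disjoint (L r) (L t)) :
    IsOA m n (cosetArray e L hL) := by
  intro r t hrt
  refine (Fintype.bijective_iff_injective_and_card _).mpr ⟨fun c d hcd => ?_, by simp [sq]⟩
  obtain ⟨hr, ht⟩ := Prod.mk.inj hcd
  have h := AddSubgroup.disjoint_def.mp (hL_disj hrt)
    ((cosetArray_eq_iff e hL).mp hr) ((cosetArray_eq_iff e hL).mp ht)
  exact e.symm.injective (sub_eq_zero.mp h)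

theorem blockGraph_cosetArray_adj (x y : V) :
    (blockGraph (cosetArray e L hL)).Adj (e x) (e y) ↔ x ≠ y ∧ ∃ r, x - y ∈ L r := by
  simp only [blockGraph, cosetArray_eq_iff, e.injective.ne_iff, Equiv.symm_apply_apply]

end CosetArray

theorem isSquare_zpow_iff_even {G : Type*} [Group G] {g : G}
    (hg : ∀ x, x ∈ Subgroup.zpowers g) (hg2 : Even (orderOf g)) (n : ℤ) :
    IsSquare (g ^ n) ↔ Even n := by
  refine ⟨fun ⟨x, hx⟩ => ?_, fun ⟨j, hj⟩ => ⟨g ^ j, by rw [hj, zpow_add]⟩⟩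
  obtain ⟨j, rfl⟩ := Subgroup.mem_zpowers_iff.mp (hg x)
  have h : (orderOf g : ℤ) ∣ n - (j + j) := by
    rw [orderOf_dvd_iff_zpow_eq_one, zpow_sub, hx, zpow_add, mul_inv_cancel]
  have h2 : (2 : ℤ) ∣ n - (j + j) := (even_iff_two_dvd.mp ((Int.even_coe_nat _).mpr hg2)).trans h
  rw [even_iff_two_dvd]
  omega

theorem Units.isSquare_val_iff {M : Type*} [GroupWithZero M] (u : Mˣ) :
    IsSquare (u : M) ↔ IsSquare u := by
  refine ⟨fun ⟨x, hx⟩ => ?_, fun ⟨v, hv⟩ => ⟨v, by rw [hv, Units.val_mul]⟩⟩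
  have hx0 : x ≠ 0 := by rintro rfl; simp at hx
  exact ⟨Units.mk0 x hx0, Units.ext (by simpa using hx)⟩

theorem exists_fin_dvd_sub_two_mul_iff_even {m : ℕ} (hm : 0 < m) (n : ℤ) :
    (∃ r : Fin m, (2 * m : ℤ) ∣ n - 2 * r) ↔ Even n := by
  constructor
  · rintro ⟨r, j, hj⟩
    exact ⟨r + m * j, by linear_combination hj⟩
  · rintro ⟨i, rfl⟩
    have h0 := Int.emod_nonneg i (Int.natCast_ne_zero.mpr hm.ne')
    have h1 := Int.emod_lt_of_pos i (Int.natCast_pos.mpr hm)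
    refine ⟨⟨(i % m).toNat, by omega⟩, i / m, ?_⟩
    rw [Fin.val_mk, Int.toNat_of_nonneg h0, Int.emod_def]
    ring

theorem Subfield.mem_span_singleton_iff_div_mem {F : Type*} [Field F] {K : Subfield F}
    {s y : F} (hs : s ≠ 0) : y ∈ Submodule.span K {s} ↔ y / s ∈ K := by
  rw [Submodule.mem_span_singleton]
  constructor
  · rintro ⟨a, rfl⟩
    rw [Subfield.smul_def, smul_eq_mul, mul_div_cancel_right₀ _ hs]
    exact a.2
  · intro h
    exact ⟨⟨y / s, h⟩, by rw [Subfield.smul_def, smul_eq_mul, div_mul_cancel₀ _ hs]⟩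

section Frobenius

variable (F : Type*) [Field F] (p k : ℕ) [ExpChar F p]

def frobeniusFixedField : Subfield F :=
  (iterateFrobenius F p k).eqLocusField (RingHom.id F)

variable {F p k}

theorem mem_frobeniusFixedField_iff {x : F} :
    x ∈ frobeniusFixedField F p k ↔ x = 0 ∨ x ^ (p ^ k - 1) = 1 := by
  change x ^ p ^ k = x ↔ _
  rw [← pow_sub_one_mul (expChar_pow_pos F p k).ne']
  rcases eq_or_ne x 0 with rfl | hx
  · simp
  · simp [mul_eq_right₀ hx, hx]

variable {g : Fˣ} (hq : 1 < p ^ k) (hg : orderOf g = (p ^ k - 1) * (p ^ k + 1))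
include hq hg

theorem zpow_mem_frobeniusFixedField_iff (n : ℤ) :
    ((g ^ n : Fˣ) : F) ∈ frobeniusFixedField F p k ↔ (p ^ k + 1 : ℤ) ∣ n := by
  rw [mem_frobeniusFixedField_iff, or_iff_right (Units.ne_zero _), ← Units.val_pow_eq_pow_val,
    Units.val_eq_one, ← zpow_natCast, ← zpow_mul, ← orderOf_dvd_iff_zpow_eq_one, hg]
  have hq' : (1 : ℤ) < p ^ k := by exact_mod_cast hq
  push_cast [Nat.cast_sub hq.le]
  rw [mul_comm n, mul_dvd_mul_iff_left (sub_ne_zero.mpr hq'.ne')]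

theorem natCard_frobeniusFixedField : Nat.card (frobeniusFixedField F p k) = p ^ k := by
  have hζ : IsPrimitiveRoot ((g : F) ^ (p ^ k + 1)) (p ^ k - 1) :=
    ((IsPrimitiveRoot.coe_units_iff.mpr (IsPrimitiveRoot.orderOf g)).pow
      (by rw [hg]; exact Nat.mul_pos (by omega) (by omega)) (hg.trans (mul_comm _ _)))
  have hq1 : 0 < p ^ k - 1 := by omega
  classical
  have hK : ((frobeniusFixedField F p k : Subfield F) : Set F) =
      ↑(insert 0 (Polynomial.nthRootsFinset (p ^ k - 1) (1 : F))) := by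
    ext x
    simp [mem_frobeniusFixedField_iff, Polynomial.mem_nthRootsFinset hq1]
  rw [← SetLike.coe_sort_coe, hK, Finset.coe_sort_coe, Nat.card_eq_finsetCard,
    Finset.card_insert_of_notMem, hζ.card_nthRootsFinset, Nat.sub_add_cancel hq.le]
  simp [Polynomial.mem_nthRootsFinset hq1, zero_pow hq1.ne']

end Frobenius

section SquareLine

variable {F : Type*} [Field F] (p k : ℕ) [ExpChar F p]

def squareLine (g : Fˣ) (r : ℕ) : Submodule (frobeniusFixedField F p k) F :=
  Submodule.span _ {((g ^ (2 * r : ℤ) : Fˣ) : F)}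

variable {p k} {g : Fˣ} (hq : 1 < p ^ k) (hg : orderOf g = (p ^ k - 1) * (p ^ k + 1))
include hq hg

theorem natCard_squareLine (r : ℕ) : Nat.card (squareLine p k g r) = p ^ k :=
  (Nat.card_congr (LinearEquiv.toSpanNonzeroSingleton _ F _ (Units.ne_zero _)).toEquiv).symm.trans
    (natCard_frobeniusFixedField hq hg)

theorem zpow_mem_squareLine_iff (r : ℕ) (n : ℤ) :
    ((g ^ n : Fˣ) : F) ∈ squareLine p k g r ↔ (p ^ k + 1 : ℤ) ∣ n - 2 * r := by
  rw [squareLine, Subfield.mem_span_singleton_iff_div_mem (Units.ne_zero _),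
    ← Units.val_div_eq_div_val, div_eq_mul_inv, ← zpow_sub, zpow_mem_frobeniusFixedField_iff hq hg]

theorem disjoint_squareLine {r t : ℕ} (hr : 2 * r < p ^ k + 1) (ht : 2 * t < p ^ k + 1)
    (hrt : r ≠ t) :
    Disjoint (squareLine p k g r).toAddSubgroup (squareLine p k g t).toAddSubgroup := by
  have hslope : ((g ^ (2 * t : ℤ) : Fˣ) : F) ∉ squareLine p k g r := by
    have hr' : (2 * r : ℤ) < p ^ k + 1 := by exact_mod_cast hr
    have ht' : (2 * t : ℤ) < p ^ k + 1 := by exact_mod_cast ht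
    rw [zpow_mem_squareLine_iff hq hg]
    intro hdvd
    have := Int.eq_zero_of_abs_lt_dvd hdvd (by rw [abs_lt]; constructor <;> omega)
    omega
  have h := (Submodule.disjoint_span_singleton' (Units.ne_zero _)).mpr hslope
  exact AddSubgroup.disjoint_def.mpr fun {x} hx hy => Submodule.disjoint_def.mp h x hx hy

theorem exists_mem_squareLine_iff_isSquare (hgen : ∀ u, u ∈ Subgroup.zpowers g) {m : ℕ}
    (hm : p ^ k + 1 = 2 * m) {y : F} (hy : y ≠ 0) :
    (∃ r : Fin m, y ∈ squareLine p k g r) ↔ IsSquare y := by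
  obtain ⟨n, hn⟩ := Subgroup.mem_zpowers_iff.mp (hgen (Units.mk0 y hy))
  obtain rfl : ((g ^ n : Fˣ) : F) = y := by rw [hn, Units.val_mk0]
  have hm' : (p ^ k + 1 : ℤ) = 2 * m := by exact_mod_cast hm
  have h2 : Even (orderOf g) := hg ▸ hm ▸ (even_two_mul m).mul_left _
  simp_rw [zpow_mem_squareLine_iff hq hg, Units.isSquare_val_iff, isSquare_zpow_iff_even hgen h2,
    hm']
  exact exists_fin_dvd_sub_two_mul_iff_even (by omega) n

end SquareLine

theorem paley_iso_blockGraph_general (q : ℕ) (hq : IsPrimePow q) (hodd : Odd q)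
    (F : Type*) [Field F] [Fintype F] (hF : Fintype.card F = q ^ 2)
    (G : SimpleGraph F)
    (hG : ∀ x y : F, G.Adj x y ↔ x ≠ y ∧ IsSquare (x - y)) :
    ∃ A : Fin ((q + 1) / 2) → Fin (q ^ 2) → Fin q,
      IsOA ((q + 1) / 2) q A ∧ Nonempty (G ≃g blockGraph A) := by
  obtain ⟨p, k, hp, hk, rfl⟩ := hq
  have : Fact p.Prime := ⟨Nat.prime_iff.mpr hp⟩
  have : CharP F p := charP_of_card_eq_prime_pow (hF.trans (pow_mul p k 2).symm)
  have hq : 1 < p ^ k := Nat.one_lt_pow hk.ne' (Nat.prime_iff.mpr hp).one_lt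
  obtain ⟨g, hgen⟩ := IsCyclic.exists_generator (α := Fˣ)
  have hg : orderOf g = (p ^ k - 1) * (p ^ k + 1) := by
    rw [orderOf_eq_card_of_forall_mem_zpowers hgen, Nat.card_units, Nat.card_eq_fintype_card, hF]
    simpa [mul_comm] using Nat.sq_sub_sq (p ^ k) 1
  have hm : p ^ k + 1 = 2 * ((p ^ k + 1) / 2) := by obtain ⟨c, hc⟩ := hodd; omega
  let L : Fin ((p ^ k + 1) / 2) → AddSubgroup F := fun r => (squareLine p k g r).toAddSubgroup
  have hL : ∀ r, Nat.card (F ⧸ L r) = p ^ k := fun r =>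
    natCard_quotient_eq_of_natCard_eq_sq (by rw [Nat.card_eq_fintype_card, hF])
      (natCard_squareLine hq hg r)
  let e := Fintype.equivFinOfCardEq hF
  refine ⟨cosetArray e L hL, isOA_cosetArray e hL fun r t hrt => ?_, ⟨e, fun {x y} => ?_⟩⟩
  · exact disjoint_squareLine hq hg (by omega) (by omega) (Fin.val_ne_of_ne hrt)
  · rw [blockGraph_cosetArray_adj, hG]
    exact and_congr_right fun hxy =>
      exists_mem_squareLine_iff_isSquare hq hg hgen hm (sub_ne_zero.mpr hxy)

/-- For an odd prime power `q`, the Paley graph `P(q²)` is isomorphic to the block graph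
of an orthogonal array `OA((q+1)/2, q)`. -/
theorem paley_iso_blockGraph (q : ℕ) (hq : IsPrimePow q) (hodd : Odd q)
    (F : Type*) [Field F] [Fintype F] [DecidableEq F] (hF : Fintype.card F = q ^ 2)
    (G : SimpleGraph F) [DecidableRel G.Adj]
    (hG : ∀ x y : F, G.Adj x y ↔ x ≠ y ∧ IsSquare (x - y)) :
    ∃ A : Fin ((q + 1) / 2) → Fin (q ^ 2) → Fin q,
      IsOA ((q + 1) / 2) q A ∧ Nonempty (G ≃g blockGraph A) :=
  paley_iso_blockGraph_general q hq hodd F hF G hG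
end

section
/- For an odd prime power q, exactly (q+1)/2 of the q+1 directions (1-dimensional F_q-subspaces) of F_{q²} consist of squares, i.e., exactly (q+1)/2 of the q+1 parallel classes of lines through 0 in F_{q²} are spanned by a nonzero square of F_{q²}. -/
/-!
A nonzero `s` spans the direction `s • K`, and `s • K = t • K` exactly when `s⁻¹ * t ∈ Kˣ`, so the
directions are the cosets of `Kˣ` in `Fˣ`; there are `(q² - 1) / (q - 1) = q + 1` of them.
By Euler's criterion `Kˣ` consists of squares (`q - 1` divides `(q² - 1) / 2`), so the square
directions are the cosets of `Kˣ` inside the subgroup of squares, which has index `2` in the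
cyclic group `Fˣ`; hence there are `(q + 1) / 2` of them.
-/

theorem Subgroup.ncard_range_eq_index {G X : Type*} [Group G] (H : Subgroup G) (f : G → X)
    (hf : ∀ u v, f u = f v ↔ u⁻¹ * v ∈ H) : (Set.range f).ncard = H.index := by
  rw [← Nat.card_coe_set_eq, Subgroup.index, ← Nat.card_congr (Setoid.quotientKerEquivRange f)]
  exact Nat.card_congr
    (Quotient.congrRight fun u v => (hf u v).trans QuotientGroup.leftRel_apply.symm)

theorem Subgroup.ncard_image_eq_relIndex {G X : Type*} [Group G] (H S : Subgroup G) (f : G → X)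
    (hf : ∀ u v, f u = f v ↔ u⁻¹ * v ∈ H) : (f '' S).ncard = H.relIndex S := by
  rw [Set.image_eq_range, Subgroup.relIndex]
  exact (H.subgroupOf S).ncard_range_eq_index _ fun u v => by simp [hf, Subgroup.mem_subgroupOf]

theorem Subgroup.square_eq_range_powMonoidHom (G : Type*) [CommGroup G] :
    Subgroup.square G = (powMonoidHom 2 : G →* G).range := by
  ext u
  simp [IsSquare, sq, eq_comm]

section Field

variable {F : Type*} [Field F] (K : Subfield F)

theorem Subfield.mem_units_iff (u : Fˣ) : u ∈ K.toSubmonoid.units ↔ (u : F) ∈ K := by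
  simp [Submonoid.mem_units_iff, Units.val_inv_eq_inv_val]

theorem Subfield.card_units : Nat.card K.toSubmonoid.units = Nat.card K - 1 := by
  rw [Nat.card_congr K.toSubmonoid.unitsEquivUnitsType.toEquiv]
  exact Nat.card_units K

end Field

section FiniteField

variable {F : Type*} [Field F] [Fintype F]

theorem Subfield.index_units_of_card_eq_sq (K : Subfield F)
    (hF : Fintype.card F = Nat.card K ^ 2) : K.toSubmonoid.units.index = Nat.card K + 1 := by
  have hK : 1 < Nat.card K := Finite.one_lt_card
  have h := K.toSubmonoid.units.card_mul_index
  rw [K.card_units, Nat.card_units, Nat.card_eq_fintype_card (α := F), hF] at h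
  refine Nat.eq_of_mul_eq_mul_left (Nat.sub_pos_of_lt hK) (h.trans ?_)
  simpa [mul_comm] using Nat.sq_sub_sq (Nat.card K) 1

theorem FiniteField.index_square_units (hF : ringChar F ≠ 2) : (Subgroup.square Fˣ).index = 2 := by
  have hodd := FiniteField.odd_card_of_char_ne_two hF
  rw [Subgroup.square_eq_range_powMonoidHom, IsCyclic.index_powMonoidHom_range, Nat.card_units,
    Nat.card_eq_fintype_card]
  exact Nat.gcd_eq_right (Nat.dvd_of_mod_eq_zero (by omega))

theorem Subfield.units_le_square (hF : ringChar F ≠ 2) (K : Subfield F)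
    (hK : Nat.card K - 1 ∣ Fintype.card F / 2) :
    K.toSubmonoid.units ≤ Subgroup.square Fˣ := fun u hu => by
  rw [Subgroup.mem_square, FiniteField.unit_isSquare_iff hF, ← orderOf_dvd_iff_pow_eq_one]
  exact (Subgroup.orderOf_dvd_natCard _ hu).trans (K.card_units ▸ hK)

theorem Subfield.units_le_square_of_card_eq_sq (hF : ringChar F ≠ 2) (K : Subfield F)
    (hK : Fintype.card F = Nat.card K ^ 2) :
    K.toSubmonoid.units ≤ Subgroup.square Fˣ := by
  have hodd : Odd (Nat.card K ^ 2) :=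
    hK ▸ Nat.odd_iff.mpr (FiniteField.odd_card_of_char_ne_two hF)
  obtain ⟨k, hk⟩ := (Nat.odd_pow_iff two_ne_zero).mp hodd
  refine K.units_le_square hF ⟨k + 1, ?_⟩
  rw [hK, hk, show (2 * k + 1) ^ 2 = 2 * (2 * k * (k + 1)) + 1 by ring, Nat.add_sub_cancel]
  omega

end FiniteField

section Directions

variable {F : Type*} [Field F] (K : Subfield F)

def Subfield.direction (s : F) : Set F := {x | ∃ c ∈ K, x = s * c}

theorem Subfield.direction_subset_direction {u v : Fˣ} (h : u⁻¹ * v ∈ K.toSubmonoid.units) :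
    K.direction v ⊆ K.direction u := by
  rintro _ ⟨c, hc, rfl⟩
  refine ⟨(u⁻¹ * v : Fˣ) * c, K.mul_mem ((K.mem_units_iff _).mp h) hc, ?_⟩
  simp [mul_assoc]

theorem Subfield.direction_eq_direction_iff (u v : Fˣ) :
    K.direction u = K.direction v ↔ u⁻¹ * v ∈ K.toSubmonoid.units := by
  refine ⟨fun h => ?_, fun h => (K.direction_subset_direction ?_).antisymm
    (K.direction_subset_direction h)⟩
  · obtain ⟨c, hc, hvc⟩ : (v : F) ∈ K.direction u := h ▸ ⟨1, K.one_mem, (mul_one _).symm⟩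
    rw [K.mem_units_iff, Units.val_mul, Units.val_inv_eq_inv_val, hvc,
      inv_mul_cancel_left₀ u.ne_zero]
    exact hc
  · simpa using inv_mem h

theorem Subfield.setOf_direction_eq_range :
    {D : Set F | ∃ s : F, s ≠ 0 ∧ D = K.direction s} = Set.range fun u : Fˣ => K.direction u := by
  ext D
  constructor
  · rintro ⟨s, hs, rfl⟩
    exact ⟨Units.mk0 s hs, rfl⟩
  · rintro ⟨u, rfl⟩
    exact ⟨u, u.ne_zero, rfl⟩

theorem Subfield.setOf_square_direction_eq_image :
    {D : Set F | ∃ s : F, s ≠ 0 ∧ IsSquare s ∧ D = K.direction s} =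
      (fun u : Fˣ => K.direction u) '' Subgroup.square Fˣ := by
  ext D
  constructor
  · rintro ⟨s, hs, hsq, rfl⟩
    exact ⟨Units.mk0 s hs, (Units.isSquare_val_iff (Units.mk0 s hs)).mp hsq, rfl⟩
  · rintro ⟨u, hu, rfl⟩
    exact ⟨u, u.ne_zero, (Units.isSquare_val_iff u).mpr hu, rfl⟩

end Directions

theorem paley_quadratic_directions_count_general (q : ℕ) (hodd : Odd q)
    (F : Type*) [Field F] [Fintype F] (hF : Fintype.card F = q ^ 2)
    (K : Subfield F) (hK : Nat.card K = q) :
    ({D : Set F | ∃ s : F, s ≠ 0 ∧ D = {x : F | ∃ c ∈ K, x = s * c}}).ncard = q + 1 ∧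
    ({D : Set F | ∃ s : F, s ≠ 0 ∧ IsSquare s ∧ D = {x : F | ∃ c ∈ K, x = s * c}}).ncard
      = (q + 1) / 2 := by
  have hchar : ringChar F ≠ 2 := by
    rw [Ne, FiniteField.even_card_iff_char_two, hF, ← Nat.even_iff, Nat.not_even_iff_odd]
    exact hodd.pow
  have hcard : Fintype.card F = Nat.card K ^ 2 := hK ▸ hF
  have hle := K.units_le_square_of_card_eq_sq hchar hcard
  refine ⟨(congrArg Set.ncard K.setOf_direction_eq_range).trans ?_,
    (congrArg Set.ncard K.setOf_square_direction_eq_image).trans ?_⟩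
  · rw [Subgroup.ncard_range_eq_index _ _ K.direction_eq_direction_iff,
      K.index_units_of_card_eq_sq hcard, hK]
  · have h := Subgroup.relIndex_mul_index hle
    rw [FiniteField.index_square_units hchar, K.index_units_of_card_eq_sq hcard, hK] at h
    rw [Subgroup.ncard_image_eq_relIndex _ _ _ K.direction_eq_direction_iff]
    omega

/-- For an odd prime power `q`, there are `q + 1` directions (1-dimensional
`F_q`-subspaces) of `F_{q²}`, and exactly `(q+1)/2` of them are spanned by a nonzero
square of `F_{q²}`. -/
theorem paley_quadratic_directions_count (q : ℕ) (hq : IsPrimePow q) (hodd : Odd q)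
    (F : Type*) [Field F] [Fintype F] [DecidableEq F] (hF : Fintype.card F = q ^ 2)
    (K : Subfield F) (hK : Nat.card K = q) :
    ({D : Set F | ∃ s : F, s ≠ 0 ∧ D = {x : F | ∃ c ∈ K, x = s * c}}).ncard = q + 1 ∧
    ({D : Set F | ∃ s : F, s ≠ 0 ∧ IsSquare s ∧ D = {x : F | ∃ c ∈ K, x = s * c}}).ncard
      = (q + 1) / 2 :=
  paley_quadratic_directions_count_general q hodd F hF K hK
end

section
/- Let q be an odd prime power. The balanced characteristic vectors of the canonical cliques (quadratic lines) of the Paley graph P(q²) span the (−1+q)/2-eigenspace of its adjacency matrix. -/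
/-!
Write `S` for the nonzero squares of `F`, so that the adjacency operator is
`g ↦ (x ↦ ∑ w ∈ S, g (x - w))`, and `θ = (q - 1) / 2`. Since `[F : K] = 2`, every element of `K`
is a square in `F`. For `y ∉ K` the map `(a, b) ↦ a * y - b` identifies `Kˣ × K` with `F \ K`,
and `a * y - b` is a square iff `y - b / a` is; counting squares on both sides shows that `y - c`
is a nonzero square for exactly `(q - 1) / 2` elements `c ∈ K`, against `q - 1` when `y ∈ K`.
These two counts say precisely that `1_L - 1 / q` is a `θ`-eigenvector for every line
`L = a + s • K` with `s ∈ S`.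

Conversely, an eigenvector `g` sums to zero because `θ ≠ #S`, and then
`∑ s ∈ S, ∑ a, g a • (1_{a + s • K} - 1 / q)` evaluates at `x` to
`∑ s ∈ S, ∑ c ∈ K, g (x - s * c) = (#S + (q - 1) * θ) * g x = q * (q - 1) * g x`,
since `c • S = S` for `c ∈ Kˣ`.
-/

section PaleyGraph

open Finset Matrix Module.End

section CayleyGraph

variable {V : Type*} [AddCommGroup V] [Fintype V] {G : SimpleGraph V} [DecidableRel G.Adj]
  {S : Finset V}

lemma adjMatrix_mulVec_apply_eq_sum_sub {R : Type*} [NonAssocSemiring R]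
    (hG : ∀ x y, G.Adj x y ↔ x - y ∈ S) (g : V → R) (x : V) :
    (G.adjMatrix R *ᵥ g) x = ∑ w ∈ S, g (x - w) := by
  classical
  rw [mulVec, dotProduct, ← (Equiv.subLeft x).sum_comp]
  simp [SimpleGraph.adjMatrix_apply, hG, sum_ite_mem]

lemma mem_eigenspace_adjMatrix_iff [DecidableEq V] (hG : ∀ x y, G.Adj x y ↔ x - y ∈ S)
    {μ : ℝ} {g : V → ℝ} :
    g ∈ eigenspace (toLin' (G.adjMatrix ℝ)) μ ↔ ∀ x, ∑ w ∈ S, g (x - w) = μ * g x := by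
  simp only [mem_eigenspace_iff, toLin'_apply, funext_iff, adjMatrix_mulVec_apply_eq_sum_sub hG,
    Pi.smul_apply, smul_eq_mul]

lemma sum_sum_sub_eq_card_nsmul_sum {M : Type*} [AddCommMonoid M] (S : Finset V) (g : V → M) :
    ∑ x, ∑ w ∈ S, g (x - w) = #S • ∑ x, g x := by
  rw [sum_comm, ← sum_const]
  exact sum_congr rfl fun w _ => (Equiv.subRight w).sum_comp g

lemma sum_eq_zero_of_sum_sub_eq_mul {μ : ℝ} {g : V → ℝ} (hμ : μ ≠ #S)
    (hg : ∀ x, ∑ w ∈ S, g (x - w) = μ * g x) : ∑ x, g x = 0 := by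
  have h := sum_sum_sub_eq_card_nsmul_sum S g
  rw [sum_congr rfl fun x _ => hg x, ← mul_sum, nsmul_eq_mul] at h
  have h' : (μ - #S) * ∑ x, g x = 0 := by linear_combination h
  exact (mul_eq_zero.mp h').resolve_left (sub_ne_zero.mpr hμ)

end CayleyGraph

variable {F : Type*} [Field F]

section NonzeroSquares

variable [Fintype F] [DecidableEq F]

variable (F) in
def nonzeroSquares : Finset F :=
  univ.filter fun z => z ≠ 0 ∧ IsSquare z

@[simp]
lemma mem_nonzeroSquares {z : F} : z ∈ nonzeroSquares F ↔ z ≠ 0 ∧ IsSquare z := by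
  simp [nonzeroSquares]

lemma mul_mem_nonzeroSquares_iff {s z : F} (hs : s ∈ nonzeroSquares F) :
    s * z ∈ nonzeroSquares F ↔ z ∈ nonzeroSquares F := by
  obtain ⟨hs0, hsq⟩ := mem_nonzeroSquares.mp hs
  refine ⟨fun h => ?_, fun h => ?_⟩
  · obtain ⟨hz0, hzsq⟩ := mem_nonzeroSquares.mp h
    rw [mem_nonzeroSquares, ← inv_mul_cancel_left₀ hs0 z]
    exact ⟨by simpa [hs0] using hz0, hsq.inv.mul hzsq⟩
  · obtain ⟨hz0, hzsq⟩ := mem_nonzeroSquares.mp h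
    exact mem_nonzeroSquares.mpr ⟨mul_ne_zero hs0 hz0, hsq.mul hzsq⟩

lemma sum_nonzeroSquares_comp_mul {M : Type*} [AddCommMonoid M] {s : F}
    (hs : s ∈ nonzeroSquares F) (h : F → M) :
    ∑ w ∈ nonzeroSquares F, h (s * w) = ∑ w ∈ nonzeroSquares F, h w :=
  sum_equiv (Equiv.mulLeft₀ s (mem_nonzeroSquares.mp hs).1)
    (fun _ => (mul_mem_nonzeroSquares_iff hs).symm) (fun _ _ => rfl)

lemma card_nonzeroSquares_mul_two_add_one (hF : ringChar F ≠ 2) :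
    #(nonzeroSquares F) * 2 + 1 = Fintype.card F := by
  have hχ : ∀ a : F, quadraticChar F a =
      2 * (if a ∈ nonzeroSquares F then 1 else 0) - (if a ≠ 0 then 1 else 0) := by
    intro a
    by_cases ha : a = 0
    · simp [ha]
    by_cases hsq : IsSquare a
    · simp [ha, hsq, (quadraticChar_one_iff_isSquare ha).mpr hsq]
    · simp [ha, hsq, quadraticChar_neg_one_iff_not_isSquare.mpr hsq]
  have hsum := quadraticChar_sum_zero hF
  simp only [hχ, sum_sub_distrib, ← mul_sum, sum_boole, filter_mem_eq_inter, univ_inter,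
    filter_ne', card_erase_of_mem (mem_univ _), card_univ] at hsum
  have := Fintype.card_pos (α := F)
  omega

end NonzeroSquares

section QuadraticExtension

variable [Fintype F] {K : Subfield F} [Fintype K]

/-- Euler's criterion: `c ^ (q - 1) = 1` for `c ∈ Kˣ`, and `q - 1` divides `(q ^ 2 - 1) / 2`. -/
lemma isSquare_of_mem_of_card_eq_sq (hF : Fintype.card F = Fintype.card K ^ 2) {c : F}
    (hc : c ∈ K) : IsSquare c := by
  by_cases hF2 : ringChar F = 2
  · exact FiniteField.isSquare_of_char_two hF2 c
  rcases eq_or_ne c 0 with rfl | hc0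
  · exact .zero
  have hq : Odd (Fintype.card K) := by
    have := FiniteField.odd_card_of_char_ne_two hF2
    rw [hF] at this
    exact Nat.Odd.of_mul_right (by simpa [sq, Nat.odd_iff] using this)
  obtain ⟨k, hk⟩ := hq
  have hexp : Fintype.card F / 2 = (Fintype.card K - 1) * (k + 1) := by
    rw [hF, hk, show (2 * k + 1) ^ 2 = 2 * ((2 * k + 1 - 1) * (k + 1)) + 1 by
      rw [Nat.add_sub_cancel]; ring]
    omega
  have hpow : c ^ (Fintype.card K - 1) = 1 := by
    simpa using congrArg Subtype.val
      (FiniteField.pow_card_sub_one_eq_one (⟨c, hc⟩ : K) (by simpa [Subtype.ext_iff] using hc0))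
  rw [FiniteField.isSquare_iff hF2 hc0, hexp, pow_mul, hpow, one_pow]

lemma bijective_mul_sub_of_notMem (hF : Fintype.card F = Fintype.card K ^ 2) {x : F}
    (hx : x ∉ K) : Function.Bijective fun p : K × K => (p.1 : F) * x - p.2 := by
  refine (Fintype.bijective_iff_injective_and_card _).mpr
    ⟨?_, by rw [Fintype.card_prod, hF, sq]⟩
  rintro ⟨a, b⟩ ⟨a', b'⟩ h
  have ha : a = a' := by
    by_contra hne
    have hne' : (a : F) - a' ≠ 0 := sub_ne_zero.mpr fun h' => hne (Subtype.ext h')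
    refine hx ?_
    rw [show x = (b - b') / (a - a') by field_simp; linear_combination h]
    exact K.div_mem (K.sub_mem b.2 b'.2) (K.sub_mem a.2 a'.2)
  subst ha
  exact Prod.ext rfl (Subtype.ext (sub_right_inj.mp h))

variable [DecidableEq F]

lemma card_filter_sub_mem_nonzeroSquares_of_mem (hF : Fintype.card F = Fintype.card K ^ 2)
    {y : F} (hy : y ∈ K) :
    #{c : K | y - c ∈ nonzeroSquares F} = Fintype.card K - 1 := by
  have : ∀ c : K, y - c ∈ nonzeroSquares F ↔ c ≠ ⟨y, hy⟩ := fun c => by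
    simp [sub_eq_zero, Subtype.ext_iff, eq_comm,
      isSquare_of_mem_of_card_eq_sq hF (K.sub_mem hy c.2)]
  simp only [this, filter_ne', card_erase_of_mem (mem_univ _), card_univ]

lemma card_filter_sub_mem_nonzeroSquares_of_notMem (hF : Fintype.card F = Fintype.card K ^ 2)
    (hF2 : ringChar F ≠ 2) {y : F} (hy : y ∉ K) :
    #{c : K | y - c ∈ nonzeroSquares F} * 2 + 1 = Fintype.card K := by
  set N := #{c : K | y - c ∈ nonzeroSquares F}
  have hfiber : ∀ a : K, a ≠ 0 → #{b : K | (a : F) * y - b ∈ nonzeroSquares F} = N := by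
    intro a ha
    have haS : (a : F) ∈ nonzeroSquares F :=
      mem_nonzeroSquares.mpr ⟨by simpa using ha, isSquare_of_mem_of_card_eq_sq hF a.2⟩
    refine (card_equiv (Equiv.mulLeft₀ a ha) fun c => ?_).symm
    simp only [mem_filter, mem_univ, true_and, Equiv.mulLeft₀_apply, Subfield.coe_mul, ← mul_sub,
      mul_mem_nonzeroSquares_iff haS]
  have hcount : #(nonzeroSquares F) = (Fintype.card K - 1) + (Fintype.card K - 1) * N := by
    rw [← card_equiv (Equiv.ofBijective _ (bijective_mul_sub_of_notMem hF hy))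
      (t := nonzeroSquares F) (s := {p : K × K | (p.1 : F) * y - p.2 ∈ nonzeroSquares F})
      (fun p => by simp), card_filter, Fintype.sum_prod_type, Fintype.sum_eq_add_sum_compl 0]
    simp only [← card_filter]
    rw [sum_congr rfl fun a ha => hfiber a (by simpa using ha), sum_const, card_compl,
      card_singleton, smul_eq_mul]
    simpa using card_filter_sub_mem_nonzeroSquares_of_mem hF K.zero_mem
  obtain ⟨m, hm⟩ : ∃ m, Fintype.card K = m + 2 :=
    ⟨_, (Nat.sub_add_cancel Fintype.one_lt_card).symm⟩
  have h := card_nonzeroSquares_mul_two_add_one hF2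
  rw [hcount, hF, hm, show m + 2 - 1 = m + 1 from rfl] at h
  have : (m + 1) * (N * 2) = (m + 1) * (m + 1) := by linarith
  have := Nat.eq_of_mul_eq_mul_left m.succ_pos this
  omega

lemma card_nonzeroSquares_eq (hF : Fintype.card F = Fintype.card K ^ 2) (hF2 : ringChar F ≠ 2) :
    (#(nonzeroSquares F) : ℝ) = ((Fintype.card K : ℝ) ^ 2 - 1) / 2 := by
  have h := card_nonzeroSquares_mul_two_add_one hF2
  rw [hF] at h
  have : (#(nonzeroSquares F) : ℝ) * 2 + 1 = (Fintype.card K : ℝ) ^ 2 := by exact_mod_cast h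
  linarith

end QuadraticExtension

section AffineLine

variable (K : Subfield F) in
def affineLine (a s : F) : Set F :=
  {x | ∃ c ∈ K, x = a + s * c}

variable {K : Subfield F}

lemma mem_affineLine_iff {a s x : F} (hs : s ≠ 0) :
    x ∈ affineLine K a s ↔ s⁻¹ * (x - a) ∈ K := by
  refine ⟨?_, fun h => ⟨_, h, by field_simp; ring⟩⟩
  rintro ⟨c, hc, rfl⟩
  simpa [hs] using hc

lemma sub_mem_affineLine_iff {a s x w : F} :
    x - w ∈ affineLine K a s ↔ x - a ∈ affineLine K w s := by
  constructor <;> rintro ⟨c, hc, h⟩ <;> exact ⟨c, hc, by linear_combination h⟩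

lemma sum_mul_indicator_affineLine [Fintype F] [Fintype K] {R : Type*} [NonAssocSemiring R]
    (h : F → R) {s : F} (hs : s ≠ 0) (x : F) :
    ∑ a, h a * (affineLine K a s).indicator 1 x = ∑ c : K, h (x - s * c) := by
  classical
  simp only [Set.indicator_apply, Pi.one_apply, mul_ite, mul_one, mul_zero, mem_affineLine_iff hs]
  rw [← ((Equiv.mulLeft₀ s hs).trans (Equiv.subLeft x)).sum_comp, ← sum_filter]
  simp only [Equiv.trans_apply, Equiv.mulLeft₀_apply, Equiv.subLeft_apply, sub_sub_cancel,
    inv_mul_cancel_left₀ hs]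
  exact sum_subtype _ (by simp) _

variable (K) in
noncomputable def balancedLineIndicator [Fintype K] (a s : F) : F → ℝ :=
  fun γ => (affineLine K a s).indicator 1 γ - 1 / Fintype.card K

end AffineLine

section Eigenvectors

variable [Fintype F] [DecidableEq F] {K : Subfield F} [Fintype K]

lemma sum_nonzeroSquares_indicator_affineLine_sub {a s : F} (hs : s ∈ nonzeroSquares F)
    (x : F) :
    ∑ w ∈ nonzeroSquares F, (affineLine K a s).indicator (1 : F → ℝ) (x - w) =
      #{c : K | s⁻¹ * (x - a) - c ∈ nonzeroSquares F} := by
  classical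
  have hs0 : s ≠ 0 := (mem_nonzeroSquares.mp hs).1
  calc ∑ w ∈ nonzeroSquares F, (affineLine K a s).indicator (1 : F → ℝ) (x - w)
      = ∑ w, (if w ∈ nonzeroSquares F then 1 else 0) *
          (affineLine K w s).indicator (1 : F → ℝ) (x - a) := by
        simp only [boole_mul]
        rw [sum_ite_mem, univ_inter]
        refine sum_congr rfl fun w _ => ?_
        simp only [Set.indicator_apply, Pi.one_apply, sub_mem_affineLine_iff]
    _ = ∑ c : K, if x - a - s * c ∈ nonzeroSquares F then 1 else 0 :=
        sum_mul_indicator_affineLine _ hs0 _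
    _ = #{c : K | s⁻¹ * (x - a) - c ∈ nonzeroSquares F} := by
        rw [sum_boole]
        congr 2
        refine filter_congr fun c _ => ?_
        rw [← mul_mem_nonzeroSquares_iff hs (z := s⁻¹ * (x - a) - c), mul_sub,
          mul_inv_cancel_left₀ hs0]

lemma sum_nonzeroSquares_balancedLineIndicator_sub (hF : Fintype.card F = Fintype.card K ^ 2)
    (hF2 : ringChar F ≠ 2) {a s : F} (hs : s ∈ nonzeroSquares F) (x : F) :
    ∑ w ∈ nonzeroSquares F, balancedLineIndicator K a s (x - w) =
      ((Fintype.card K : ℝ) - 1) / 2 * balancedLineIndicator K a s x := by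
  have hs0 : s ≠ 0 := (mem_nonzeroSquares.mp hs).1
  have hq : (1 : ℝ) < Fintype.card K := Nat.one_lt_cast.mpr Fintype.one_lt_card
  simp only [balancedLineIndicator]
  rw [sum_sub_distrib, sum_nonzeroSquares_indicator_affineLine_sub hs, sum_const, nsmul_eq_mul,
    card_nonzeroSquares_eq hF hF2]
  by_cases hy : s⁻¹ * (x - a) ∈ K
  · rw [card_filter_sub_mem_nonzeroSquares_of_mem hF hy,
      Set.indicator_of_mem ((mem_affineLine_iff hs0).mpr hy), Pi.one_apply,
      Nat.cast_sub Fintype.card_pos]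
    field_simp
    ring
  · rw [Set.indicator_of_notMem (mt (mem_affineLine_iff hs0).mp hy),
      ← card_filter_sub_mem_nonzeroSquares_of_notMem hF hF2 hy]
    push_cast
    field_simp
    ring

lemma sum_nonzeroSquares_sum_subfield_sub_mul (hF : Fintype.card F = Fintype.card K ^ 2)
    {μ : ℝ} {g : F → ℝ} (hg : ∀ x, ∑ w ∈ nonzeroSquares F, g (x - w) = μ * g x) (x : F) :
    ∑ s ∈ nonzeroSquares F, ∑ c : K, g (x - s * c) =
      (#(nonzeroSquares F) + (Fintype.card K - 1) * μ) * g x := by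
  have hunit : ∀ c ∈ ({0}ᶜ : Finset K), ∑ s ∈ nonzeroSquares F, g (x - s * c) = μ * g x := by
    intro c hc
    have hcS : (c : F) ∈ nonzeroSquares F := mem_nonzeroSquares.mpr
      ⟨by simpa using hc, isSquare_of_mem_of_card_eq_sq hF c.2⟩
    simpa only [mul_comm, hg x] using sum_nonzeroSquares_comp_mul hcS fun w => g (x - w)
  rw [sum_comm, Fintype.sum_eq_add_sum_compl 0, sum_congr rfl hunit]
  simp only [ZeroMemClass.coe_zero, mul_zero, sub_zero, sum_const, card_compl, card_singleton,
    nsmul_eq_mul, Nat.cast_sub Fintype.card_pos]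
  push_cast
  ring

lemma eq_smul_sum_balancedLineIndicator (hF : Fintype.card F = Fintype.card K ^ 2)
    (hF2 : ringChar F ≠ 2) {g : F → ℝ}
    (hg : ∀ x, ∑ w ∈ nonzeroSquares F, g (x - w) = ((Fintype.card K : ℝ) - 1) / 2 * g x) :
    g = ((Fintype.card K : ℝ) * (Fintype.card K - 1))⁻¹ •
      ∑ s ∈ nonzeroSquares F, ∑ a, g a • balancedLineIndicator K a s := by
  have hS := card_nonzeroSquares_eq hF hF2
  set q : ℝ := (Fintype.card K : ℝ)
  have hq : 1 < q := Nat.one_lt_cast.mpr Fintype.one_lt_card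
  have hsum : ∑ x, g x = 0 :=
    sum_eq_zero_of_sum_sub_eq_mul (by rw [hS]; intro h; nlinarith) hg
  have hline : ∀ s ∈ nonzeroSquares F, ∀ x,
      ∑ a, g a * balancedLineIndicator K a s x = ∑ c : K, g (x - s * c) := by
    intro s hs x
    simp only [balancedLineIndicator, mul_sub, sum_sub_distrib, ← sum_mul, hsum, zero_mul,
      sub_zero]
    exact sum_mul_indicator_affineLine g (mem_nonzeroSquares.mp hs).1 x
  ext x
  simp only [Pi.smul_apply, Finset.sum_apply, smul_eq_mul]
  rw [sum_congr rfl fun s hs => hline s hs x, sum_nonzeroSquares_sum_subfield_sub_mul hF hg, hS]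
  have : q - 1 ≠ 0 := by linarith
  field_simp
  ring

lemma mem_span_balancedLineIndicator (hF : Fintype.card F = Fintype.card K ^ 2)
    (hF2 : ringChar F ≠ 2) {g : F → ℝ}
    (hg : ∀ x, ∑ w ∈ nonzeroSquares F, g (x - w) = ((Fintype.card K : ℝ) - 1) / 2 * g x) :
    g ∈ Submodule.span ℝ
      {f | ∃ a s : F, s ≠ 0 ∧ IsSquare s ∧ f = balancedLineIndicator K a s} := by
  rw [eq_smul_sum_balancedLineIndicator hF hF2 hg]
  refine Submodule.smul_mem _ _ (Submodule.sum_mem _ fun s hs => Submodule.sum_mem _ fun a _ =>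
    Submodule.smul_mem _ _ (Submodule.subset_span ?_))
  exact ⟨a, s, (mem_nonzeroSquares.mp hs).1, (mem_nonzeroSquares.mp hs).2, rfl⟩

end Eigenvectors

end PaleyGraph

theorem paley_canonical_cliques_span_eigenspace_general (q : ℕ) (hodd : Odd q)
    (F : Type*) [Field F] [Fintype F] [DecidableEq F] (hF : Fintype.card F = q ^ 2)
    (G : SimpleGraph F) [DecidableRel G.Adj]
    (hG : ∀ x y : F, G.Adj x y ↔ x ≠ y ∧ IsSquare (x - y))
    (K : Subfield F) (hK : Nat.card K = q) :
    Submodule.span ℝ {f : F → ℝ | ∃ a s : F, s ≠ 0 ∧ IsSquare s ∧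
        f = fun γ => Set.indicator {x : F | ∃ c ∈ K, x = a + s * c} (fun _ => (1 : ℝ)) γ - 1 / q}
      = Module.End.eigenspace (Matrix.toLin' (G.adjMatrix ℝ)) ((-1 + (q : ℝ)) / 2) := by
  have := Fintype.ofFinite K
  rw [Nat.card_eq_fintype_card] at hK
  subst hK
  have hF2 : ringChar F ≠ 2 := fun h => by
    have := FiniteField.even_card_of_char_two h
    rw [hF, Nat.odd_iff.mp (hodd.pow : Odd (Fintype.card K ^ 2))] at this
    exact one_ne_zero this
  have hG' : ∀ x y, G.Adj x y ↔ x - y ∈ nonzeroSquares F := by simp [hG, sub_eq_zero]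
  rw [neg_add_eq_sub]
  apply le_antisymm
  · rw [Submodule.span_le]
    rintro f ⟨a, s, hs0, hs, rfl⟩
    exact (mem_eigenspace_adjMatrix_iff hG').mpr
      (sum_nonzeroSquares_balancedLineIndicator_sub hF hF2 (mem_nonzeroSquares.mpr ⟨hs0, hs⟩))
  · intro g hg
    exact mem_span_balancedLineIndicator hF hF2 ((mem_eigenspace_adjMatrix_iff hG').mp hg)

/-- For an odd prime power `q`, the balanced characteristic vectors of the canonical
cliques (quadratic lines `a + s·F_q`, `s` a nonzero square) of the Paley graph `P(q²)`
span the `(−1+q)/2`-eigenspace of its adjacency matrix. -/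
theorem paley_canonical_cliques_span_eigenspace (q : ℕ) (hq : IsPrimePow q) (hodd : Odd q)
    (F : Type*) [Field F] [Fintype F] [DecidableEq F] (hF : Fintype.card F = q ^ 2)
    (G : SimpleGraph F) [DecidableRel G.Adj]
    (hG : ∀ x y : F, G.Adj x y ↔ x ≠ y ∧ IsSquare (x - y))
    (K : Subfield F) (hK : Nat.card K = q) :
    Submodule.span ℝ {f : F → ℝ | ∃ a s : F, s ≠ 0 ∧ IsSquare s ∧
        f = fun γ => Set.indicator {x : F | ∃ c ∈ K, x = a + s * c} (fun _ => (1 : ℝ)) γ - 1 / q}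
      = Module.End.eigenspace (Matrix.toLin' (G.adjMatrix ℝ)) ((-1 + (q : ℝ)) / 2) :=
  paley_canonical_cliques_span_eigenspace_general q hodd F hF G hG K hK
end

section
/- Let q be an odd prime power. Choosing in each of the (q+1)/2 quadratic parallel classes of lines the q−1 functions g_{ji} for i ∈ {2,…,q} (where g_{ji} = q−1 on the line S_{ji} and −1 elsewhere), one obtains (q²−1)/2 functions that form a basis of the (−1+q)/2-eigenspace of the adjacency matrix of the Paley graph P(q²). -/
/-!
Write `ℓ j x` for the index of the line of class `j` through `x`. Each quadratic parallel class
partitions `F_{q²}` into `q` lines of size `q`, and lines of different classes meet in exactly one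
point, so the classes form a net. The nonzero elements of the `(q+1)/2` lines through `0` are
squares (as are all elements of `F_q`), and there are `(q²-1)/2` of them, so they are exactly the
nonzero squares: the Paley graph is the collinearity graph of the net.

For a net with `n` classes, `(A f)(x) = ∑_j (σ_j f)(x) - n f(x)`, where `σ_j f (x)` is the sum of
`f` over the line of class `j` through `x`. The line sums of `g_{ji}` vanish on every other class,
which gives the eigenvalue `q - n = (q-1)/2`. The linear map `f ↦ (σ_{ji} f - σ_{ji₀} f)_{i ≠ i₀}`
sends `g_{ji}` to `q²` times a standard basis vector, so the `g_{ji}` are independent; it is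
injective on the eigenspace, because an eigenvector `f` has total sum `0` (the eigenvalue differs
from the degree), hence all its line sums vanish and `q f = ∑_j σ_j f = 0`. This bounds the
dimension of the eigenspace by the number of the `g_{ji}`.
-/

open Finset Matrix

section Net

variable {V J : Type*} [Fintype V] {q : ℕ}

structure IsNet (ℓ : J → V → Fin q) : Prop where
  card_block (j : J) (i : Fin q) : #{x | ℓ j x = i} = q
  card_inter {j j' : J} (h : j ≠ j') (i i' : Fin q) : #{x | ℓ j x = i ∧ ℓ j' x = i'} = 1

variable (ℓ : J → V → Fin q)

def blockSum (j : J) (i : Fin q) : (V → ℝ) →ₗ[ℝ] ℝ :=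
  ∑ x with ℓ j x = i, LinearMap.proj x

def blockFun (j : J) (i : Fin q) (x : V) : ℝ :=
  (if ℓ j x = i then (q : ℝ) else 0) - 1

lemma blockSum_apply (j : J) (i : Fin q) (f : V → ℝ) :
    blockSum ℓ j i f = ∑ x with ℓ j x = i, f x := by
  simp [blockSum]

lemma sum_blockSum (j : J) (f : V → ℝ) : ∑ i, blockSum ℓ j i f = ∑ x, f x := by
  simp only [blockSum_apply]
  exact sum_fiberwise univ (ℓ j) f

def blockSumDiff (i₀ : Fin q) : (V → ℝ) →ₗ[ℝ] (J × {i // i ≠ i₀} → ℝ) :=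
  LinearMap.pi fun p ↦ blockSum ℓ p.1 p.2 - blockSum ℓ p.1 i₀

lemma blockSumDiff_apply (i₀ : Fin q) (f : V → ℝ) (p : J × {i // i ≠ i₀}) :
    blockSumDiff ℓ i₀ f p = blockSum ℓ p.1 p.2 f - blockSum ℓ p.1 i₀ f :=
  rfl

lemma neighborFinset_eq_biUnion [Fintype J] [DecidableEq V] {G : SimpleGraph V}
    [DecidableRel G.Adj] (hG : ∀ x y, G.Adj x y ↔ x ≠ y ∧ ∃ j, ℓ j x = ℓ j y) (x : V) :
    G.neighborFinset x = univ.biUnion fun j ↦ ({y | ℓ j y = ℓ j x} : Finset V).erase x := by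
  ext y
  simp [hG, eq_comm, and_comm]

namespace IsNet

variable {ℓ}

lemma sum_blockSum_self (hnet : IsNet ℓ) (j : J) (f : V → ℝ) :
    ∑ x, blockSum ℓ j (ℓ j x) f = q * ∑ x, f x := by
  rw [← sum_fiberwise' univ (ℓ j) fun i ↦ blockSum ℓ j i f, ← sum_blockSum ℓ j, mul_sum]
  simp [hnet.card_block]

lemma injective_pair (hnet : IsNet ℓ) {j j' : J} (hj : j ≠ j') :
    Function.Injective fun x ↦ (ℓ j x, ℓ j' x) := fun x y h ↦
  card_le_one.mp (hnet.card_inter hj (ℓ j x) (ℓ j' x)).le x (by simp) y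
    (by simpa [Prod.ext_iff, eq_comm] using h)

lemma blockSum_blockFun (hnet : IsNet ℓ) (j j' : J) (i i' : Fin q) :
    blockSum ℓ j' i' (blockFun ℓ j i) = q * #{x | ℓ j' x = i' ∧ ℓ j x = i} - q := by
  simp only [blockSum_apply, blockFun, sum_sub_distrib, sum_ite, sum_const_zero, sum_const,
    filter_filter, hnet.card_block, nsmul_eq_mul, add_zero, mul_one]
  ring

lemma blockSum_blockFun_same (hnet : IsNet ℓ) (j : J) (i i' : Fin q) :
    blockSum ℓ j i' (blockFun ℓ j i) = q * ((if i' = i then (q : ℝ) else 0) - 1) := by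
  rw [hnet.blockSum_blockFun]
  split_ifs with h
  · simp only [h, and_self, hnet.card_block]
    ring
  · rw [filter_false_of_mem fun x _ ⟨hx, hx'⟩ ↦ h (hx ▸ hx')]
    simp

lemma blockSum_blockFun_of_ne (hnet : IsNet ℓ) {j j' : J} (h : j' ≠ j) (i i' : Fin q) :
    blockSum ℓ j' i' (blockFun ℓ j i) = 0 := by
  simp [hnet.blockSum_blockFun, hnet.card_inter h]

lemma blockSumDiff_blockFun [DecidableEq J] (hnet : IsNet ℓ) {i₀ : Fin q} (p : J × {i // i ≠ i₀}) :
    blockSumDiff ℓ i₀ (blockFun ℓ p.1 p.2) = Pi.single p ((q : ℝ) ^ 2) := by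
  ext ⟨j, i, hi⟩
  rw [blockSumDiff_apply]
  obtain ⟨j', i', hi'⟩ := p
  by_cases hj : j = j'
  · subst hj
    simp only [hnet.blockSum_blockFun_same, if_neg hi'.symm]
    by_cases h : i = i'
    · subst h
      simp only [if_true, Pi.single_eq_same]
      ring
    · simp [h]
  · simp [hnet.blockSum_blockFun_of_ne hj, hj]

lemma linearIndependent_blockFun [DecidableEq J] (hnet : IsNet ℓ) (i₀ : Fin q) :
    LinearIndependent ℝ fun p : J × {i // i ≠ i₀} ↦ blockFun ℓ p.1 p.2 := by
  have hq : (q : ℝ) ^ 2 ≠ 0 := pow_ne_zero 2 (Nat.cast_ne_zero.mpr i₀.pos.ne')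
  refine .of_comp (((q : ℝ) ^ 2)⁻¹ • blockSumDiff ℓ i₀) ?_
  convert Pi.linearIndependent_single_one (J × {i // i ≠ i₀}) ℝ with p
  rw [Function.comp_apply, LinearMap.smul_apply, hnet.blockSumDiff_blockFun, ← Pi.single_smul',
    smul_eq_mul, inv_mul_cancel₀ hq]

variable [Fintype J] [DecidableEq V] {G : SimpleGraph V} [DecidableRel G.Adj]

lemma adjMatrix_mulVec_apply (hnet : IsNet ℓ)
    (hG : ∀ x y, G.Adj x y ↔ x ≠ y ∧ ∃ j, ℓ j x = ℓ j y) (f : V → ℝ) (x : V) :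
    (G.adjMatrix ℝ *ᵥ f) x = ∑ j, (blockSum ℓ j (ℓ j x) f - f x) := by
  rw [SimpleGraph.adjMatrix_mulVec_apply, neighborFinset_eq_biUnion ℓ hG, sum_biUnion]
  · refine sum_congr rfl fun j _ ↦ ?_
    rw [blockSum_apply, sum_erase_eq_sub (by simp)]
  · intro j _ j' _ hj
    simp only [Function.onFun, disjoint_left, mem_erase, mem_filter, mem_univ, true_and]
    rintro y ⟨hyx, hy⟩ ⟨-, hy'⟩
    exact hyx (hnet.injective_pair hj (Prod.ext hy hy'))

lemma mem_eigenspace_iff (hnet : IsNet ℓ)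
    (hG : ∀ x y, G.Adj x y ↔ x ≠ y ∧ ∃ j, ℓ j x = ℓ j y) {f : V → ℝ} :
    f ∈ Module.End.eigenspace (toLin' (G.adjMatrix ℝ)) ((q : ℝ) - Fintype.card J) ↔
      ∀ x, ∑ j, blockSum ℓ j (ℓ j x) f = q * f x := by
  simp only [Module.End.mem_eigenspace_iff, toLin'_apply, funext_iff, Pi.smul_apply, smul_eq_mul,
    hnet.adjMatrix_mulVec_apply hG, sum_sub_distrib, sum_const, card_univ, nsmul_eq_mul]
  exact forall_congr' fun x ↦ by constructor <;> intro h <;> linarith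

lemma blockFun_mem_eigenspace (hnet : IsNet ℓ)
    (hG : ∀ x y, G.Adj x y ↔ x ≠ y ∧ ∃ j, ℓ j x = ℓ j y) (j : J) (i : Fin q) :
    blockFun ℓ j i ∈ Module.End.eigenspace (toLin' (G.adjMatrix ℝ)) ((q : ℝ) - Fintype.card J) := by
  refine (hnet.mem_eigenspace_iff hG).mpr fun x ↦ ?_
  rw [sum_eq_single j (fun j' _ h ↦ hnet.blockSum_blockFun_of_ne h _ _) (by simp),
    hnet.blockSum_blockFun_same]
  rfl

lemma sum_eq_zero_of_mem_eigenspace (hnet : IsNet ℓ)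
    (hG : ∀ x y, G.Adj x y ↔ x ≠ y ∧ ∃ j, ℓ j x = ℓ j y) (hJ : 1 < Fintype.card J) (hq : q ≠ 0)
    {f : V → ℝ}
    (hf : f ∈ Module.End.eigenspace (toLin' (G.adjMatrix ℝ)) ((q : ℝ) - Fintype.card J)) :
    ∑ x, f x = 0 := by
  have h : ∑ x, ∑ j, blockSum ℓ j (ℓ j x) f = ∑ x, q * f x :=
    sum_congr rfl fun x _ ↦ (hnet.mem_eigenspace_iff hG).mp hf x
  rw [sum_comm, ← mul_sum] at h
  simp only [hnet.sum_blockSum_self, sum_const, card_univ, nsmul_eq_mul] at h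
  have hJ' : (1 : ℝ) < Fintype.card J := by exact_mod_cast hJ
  have hq' : (q : ℝ) ≠ 0 := by exact_mod_cast hq
  have : ((Fintype.card J : ℝ) - 1) * q * ∑ x, f x = 0 := by linear_combination h
  simpa [sub_eq_zero, hJ'.ne', hq'] using this

lemma eq_zero_of_blockSumDiff_eq_zero (hnet : IsNet ℓ)
    (hG : ∀ x y, G.Adj x y ↔ x ≠ y ∧ ∃ j, ℓ j x = ℓ j y) (hJ : 1 < Fintype.card J) {i₀ : Fin q}
    {f : V → ℝ} (hf : f ∈ Module.End.eigenspace (toLin' (G.adjMatrix ℝ)) ((q : ℝ) - Fintype.card J))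
    (h0 : blockSumDiff ℓ i₀ f = 0) : f = 0 := by
  have hq : (q : ℝ) ≠ 0 := Nat.cast_ne_zero.mpr i₀.pos.ne'
  have hconst (j : J) (i : Fin q) : blockSum ℓ j i f = blockSum ℓ j i₀ f := by
    by_cases hi : i = i₀
    · rw [hi]
    · simpa [blockSumDiff_apply, sub_eq_zero] using congrFun h0 (j, ⟨i, hi⟩)
  have hzero (j : J) (i : Fin q) : blockSum ℓ j i f = 0 := by
    have := sum_blockSum ℓ j f
    simp only [hconst j, sum_const, card_univ, Fintype.card_fin, nsmul_eq_mul,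
      hnet.sum_eq_zero_of_mem_eigenspace hG hJ i₀.pos.ne' hf] at this
    rw [hconst]
    exact (mul_eq_zero.mp this).resolve_left hq
  funext x
  have := (hnet.mem_eigenspace_iff hG).mp hf x
  simp only [hzero, sum_const_zero] at this
  exact (mul_eq_zero.mp this.symm).resolve_left hq

theorem span_blockFun_eq_eigenspace [DecidableEq J] (hnet : IsNet ℓ)
    (hG : ∀ x y, G.Adj x y ↔ x ≠ y ∧ ∃ j, ℓ j x = ℓ j y) (hJ : 1 < Fintype.card J) (i₀ : Fin q) :
    Submodule.span ℝ (Set.range fun p : J × {i // i ≠ i₀} ↦ blockFun ℓ p.1 p.2) =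
      Module.End.eigenspace (toLin' (G.adjMatrix ℝ)) ((q : ℝ) - Fintype.card J) := by
  set E := Module.End.eigenspace (toLin' (G.adjMatrix ℝ)) ((q : ℝ) - Fintype.card J)
  refine Submodule.eq_of_le_of_finrank_le ?_ ?_
  · exact Submodule.span_le.mpr <| Set.range_subset_iff.mpr fun p ↦
      hnet.blockFun_mem_eigenspace hG p.1 p.2
  · have hinj : Function.Injective ((blockSumDiff ℓ i₀).domRestrict E) := by
      rw [← LinearMap.ker_eq_bot, LinearMap.ker_eq_bot']
      rintro ⟨f, hf⟩ h0
      exact Subtype.ext (hnet.eq_zero_of_blockSumDiff_eq_zero hG hJ hf h0)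
    rw [finrank_span_eq_card (hnet.linearIndependent_blockFun i₀)]
    simpa using LinearMap.finrank_le_finrank_of_injective hinj

end IsNet

end Net

lemma Nat.sq_div_two_of_odd {q : ℕ} (hq : Odd q) : q ^ 2 / 2 = (q - 1) * ((q + 1) / 2) := by
  obtain ⟨t, rfl⟩ := hq
  rw [show (2 * t + 1) ^ 2 = 2 * (2 * t * (t + 1)) + 1 by ring,
    show (2 * t + 1 + 1) / 2 = t + 1 by omega, Nat.add_sub_cancel, Nat.mul_add_div two_pos]
  ring

lemma FiniteField.card_nonzero_squares_le {F : Type*} [Field F] [Fintype F] (hF : ringChar F ≠ 2) :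
    Nat.card {x : F // x ≠ 0 ∧ IsSquare x} ≤ Fintype.card F / 2 := by
  have hpos : 0 < Fintype.card F / 2 := Nat.div_pos Fintype.one_lt_card two_pos
  calc Nat.card {x : F // x ≠ 0 ∧ IsSquare x}
      ≤ Nat.card (Polynomial.nthRootsFinset (Fintype.card F / 2) (1 : F)) :=
        Nat.card_mono (finite_toSet _) fun x hx ↦
          (Polynomial.mem_nthRootsFinset hpos 1).mpr ((FiniteField.isSquare_iff hF hx.1).mp hx.2)
    _ ≤ Fintype.card F / 2 := by
        classical
        rw [Nat.card_eq_finsetCard, Polynomial.nthRootsFinset_def]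
        exact (Multiset.toFinset_card_le _).trans (Polynomial.card_nthRoots _ _)

lemma FiniteField.ringChar_ne_two_of_odd_card {F : Type*} [Field F] [Fintype F]
    (h : Odd (Fintype.card F)) : ringChar F ≠ 2 := fun h2 ↦
  Nat.not_even_iff_odd.mpr h (Nat.even_iff.mpr (FiniteField.even_card_of_char_two h2))

namespace Subfield

variable {F : Type*} [Field F] (K : Subfield F)

def direction_s18 (s : F) : Set F := {x | ∃ c ∈ K, x = s * c}

def line (a s : F) : Set F := {x | ∃ c ∈ K, x = a + s * c}

variable {K}

lemma sub_mem_direction_iff {a s x y : F} (hx : x ∈ K.line a s) :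
    x - y ∈ K.direction_s18 s ↔ y ∈ K.line a s := by
  obtain ⟨c, hc, rfl⟩ := hx
  constructor
  · rintro ⟨d, hd, h⟩
    exact ⟨c - d, sub_mem hc hd, by linear_combination -h⟩
  · rintro ⟨d, hd, rfl⟩
    exact ⟨c - d, sub_mem hc hd, by ring⟩

lemma nat_card_line (a : F) {s : F} (hs : s ≠ 0) : Nat.card (K.line a s) = Nat.card K := by
  have : K.line a s = (fun c ↦ a + s * c) '' K := by
    ext x; simp [line, eq_comm]
  rw [this, Nat.card_image_of_injective (f := fun c ↦ a + s * c)
    ((add_right_injective a).comp (mul_right_injective₀ hs))]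
  rfl

lemma direction_subset {s s' : F} (h : s ∈ K.direction_s18 s') : K.direction_s18 s ⊆ K.direction_s18 s' := by
  obtain ⟨c, hc, rfl⟩ := h
  rintro _ ⟨d, hd, rfl⟩
  exact ⟨c * d, mul_mem hc hd, by ring⟩

lemma eq_zero_of_mem_direction {s s' x : F} (hdist : K.direction_s18 s ≠ K.direction_s18 s')
    (h : x ∈ K.direction_s18 s) (h' : x ∈ K.direction_s18 s') : x = 0 := by
  obtain ⟨c, hc, rfl⟩ := h
  obtain ⟨c', hc', e⟩ := h'
  by_contra hx
  have hc0 : c ≠ 0 := right_ne_zero_of_mul hx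
  have hc0' : c' ≠ 0 := right_ne_zero_of_mul (e ▸ hx)
  refine hdist (subset_antisymm (direction_subset ⟨c' * c⁻¹, mul_mem hc' (inv_mem hc), ?_⟩)
    (direction_subset ⟨c * c'⁻¹, mul_mem hc (inv_mem hc'), ?_⟩))
  · field_simp; exact e
  · field_simp; exact e.symm

lemma existsUnique_mem_line_inter [Finite F] (hF : Nat.card F = Nat.card K ^ 2) {s s' : F}
    (hs : s ≠ 0) (hs' : s' ≠ 0) (hdist : K.direction_s18 s ≠ K.direction_s18 s') (a a' : F) :
    ∃! x, x ∈ K.line a s ∧ x ∈ K.line a' s' := by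
  have hinj : Function.Injective fun p : K × K ↦ s * p.1 - s' * p.2 := by
    rintro ⟨c, d⟩ ⟨c', d'⟩ h
    have e : s * (c - c' : F) = s' * (d - d' : F) := by linear_combination h
    have h0 : s * (c - c' : F) = 0 := eq_zero_of_mem_direction hdist
      ⟨_, sub_mem c.2 c'.2, rfl⟩ ⟨_, sub_mem d.2 d'.2, e⟩
    rw [h0, eq_comm, mul_eq_zero, sub_eq_zero] at e
    rw [mul_eq_zero, sub_eq_zero] at h0
    simp [Subtype.ext (h0.resolve_left hs), Subtype.ext (e.resolve_left hs')]
  obtain ⟨⟨c, d⟩, h⟩ := (hinj.bijective_of_nat_card_le (by rw [Nat.card_prod, hF, sq])).2 (a' - a)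
  have hx : a + s * c ∈ K.line a s := ⟨c, c.2, rfl⟩
  have hx' : a + s * c ∈ K.line a' s' := ⟨d, d.2, by linear_combination h⟩
  refine ⟨a + s * c, ⟨hx, hx'⟩, fun y ⟨hy, hy'⟩ ↦ ?_⟩
  have := eq_zero_of_mem_direction hdist ((sub_mem_direction_iff hx).mpr hy)
    ((sub_mem_direction_iff hx').mpr hy')
  exact (sub_eq_zero.mp this).symm

lemma isSquare_of_mem [Fintype F] (hF : Fintype.card F = Nat.card K ^ 2) (hodd : Odd (Nat.card K))
    {c : F} (hc : c ∈ K) : IsSquare c := by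
  rcases eq_or_ne c 0 with rfl | hc0
  · exact IsSquare.zero
  have hchar := FiniteField.ringChar_ne_two_of_odd_card (hF ▸ hodd.pow)
  let u : Kˣ := Units.mk0 ⟨c, hc⟩ fun h ↦ hc0 (congrArg Subtype.val h)
  have hu : u ^ (Nat.card K - 1) = 1 := by
    rw [← Nat.card_units]
    exact pow_card_eq_one'
  rw [FiniteField.isSquare_iff hchar hc0, hF, Nat.sq_div_two_of_odd hodd, pow_mul]
  simpa [u] using congrArg (fun v : Kˣ ↦ (v : F) ^ ((Nat.card K + 1) / 2)) hu

lemma isSquare_iff_exists_mem_direction [Fintype F] (hF : Fintype.card F = Nat.card K ^ 2)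
    (hodd : Odd (Nat.card K)) {J : Type*} [Finite J] (hJ : Nat.card J = (Nat.card K + 1) / 2)
    {s : J → F} (hs : ∀ j, s j ≠ 0 ∧ IsSquare (s j))
    (hdist : ∀ j j', j ≠ j' → K.direction_s18 (s j) ≠ K.direction_s18 (s j')) {z : F} (hz : z ≠ 0) :
    IsSquare z ↔ ∃ j, z ∈ K.direction_s18 (s j) := by
  have hsq {j : J} {z : F} : z ∈ K.direction_s18 (s j) → IsSquare z := by
    rintro ⟨c, hc, rfl⟩
    exact (hs j).2.mul (isSquare_of_mem hF hodd hc)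
  refine ⟨fun hz' ↦ ?_, fun ⟨j, hj⟩ ↦ hsq hj⟩
  let ψ : J × Kˣ → {x : F // x ≠ 0 ∧ IsSquare x} := fun p ↦
    ⟨s p.1 * (p.2 : K), mul_ne_zero (hs p.1).1 (by simp), hsq ⟨_, SetLike.coe_mem _, rfl⟩⟩
  have hψ : Function.Injective ψ := by
    rintro ⟨j, u⟩ ⟨j', u'⟩ h
    have e : s j * (u : K) = s j' * (u' : K) := congrArg Subtype.val h
    obtain rfl : j = j' := by
      by_contra hj
      exact (ψ (j, u)).2.1 (eq_zero_of_mem_direction (hdist j j' hj) ⟨_, SetLike.coe_mem _, rfl⟩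
        ⟨_, SetLike.coe_mem _, e⟩)
    rw [Units.ext (Subtype.ext (mul_left_cancel₀ (hs j).1 e))]
  have hcard : Nat.card {x : F // x ≠ 0 ∧ IsSquare x} ≤ Nat.card (J × Kˣ) := by
    rw [Nat.card_prod, Nat.card_units, hJ, mul_comm, ← Nat.sq_div_two_of_odd hodd, ← hF]
    exact FiniteField.card_nonzero_squares_le
      (FiniteField.ringChar_ne_two_of_odd_card (hF ▸ hodd.pow))
  obtain ⟨⟨j, u⟩, h⟩ := (hψ.bijective_of_nat_card_le hcard).2 ⟨z, hz, hz'⟩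
  exact ⟨j, _, SetLike.coe_mem _, (congrArg Subtype.val h).symm⟩

end Subfield

section Paley

variable {F : Type*} [Field F] {K : Subfield F} {q : ℕ} {J : Type*} {s : J → F}
  {a : J → Fin q → F} {ℓ : J → F → Fin q}

lemma isNet_of_mem_line_iff [Fintype F] (hF : Fintype.card F = Nat.card K ^ 2)
    (hK : Nat.card K = q) (hs : ∀ j, s j ≠ 0)
    (hdist : ∀ j j', j ≠ j' → K.direction_s18 (s j) ≠ K.direction_s18 (s j'))
    (hℓ : ∀ j x i, ℓ j x = i ↔ x ∈ K.line (a j i) (s j)) : IsNet ℓ where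
  card_block j i := by
    rw [← Fintype.card_subtype (fun x ↦ ℓ j x = i), ← Nat.card_eq_fintype_card,
      Nat.card_congr (Equiv.subtypeEquivRight fun x ↦ hℓ j x i)]
    exact (Subfield.nat_card_line (a j i) (hs j)).trans hK
  card_inter {j j'} hj i i' := by
    rw [card_eq_one_iff_existsUnique]
    simpa [hℓ] using Subfield.existsUnique_mem_line_inter (Nat.card_eq_fintype_card.trans hF)
      (hs j) (hs j') (hdist j j' hj) (a j i) (a j' i')

lemma adj_iff_of_mem_line_iff {G : SimpleGraph F}
    (hG : ∀ x y, G.Adj x y ↔ x ≠ y ∧ IsSquare (x - y))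
    (hsq : ∀ z ≠ 0, IsSquare z ↔ ∃ j, z ∈ K.direction_s18 (s j))
    (hℓ : ∀ j x i, ℓ j x = i ↔ x ∈ K.line (a j i) (s j)) (x y : F) :
    G.Adj x y ↔ x ≠ y ∧ ∃ j, ℓ j x = ℓ j y := by
  rw [hG]
  refine and_congr_right fun hxy ↦ ?_
  rw [hsq _ (sub_ne_zero.mpr hxy)]
  refine exists_congr fun j ↦ ?_
  rw [Subfield.sub_mem_direction_iff ((hℓ j x _).mp rfl), ← hℓ, eq_comm]

end Paley

theorem paley_eigenspace_basis_general (q : ℕ) (hodd : Odd q)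
    (F : Type*) [Field F] [Fintype F] [DecidableEq F] (hF : Fintype.card F = q ^ 2)
    (G : SimpleGraph F) [DecidableRel G.Adj]
    (hG : ∀ x y : F, G.Adj x y ↔ x ≠ y ∧ IsSquare (x - y))
    (K : Subfield F) (hK : Nat.card K = q)
    (s : Fin ((q + 1) / 2) → F) (hs : ∀ j, s j ≠ 0 ∧ IsSquare (s j))
    (hdist : ∀ j j', j ≠ j' →
      {x : F | ∃ c ∈ K, x = s j * c} ≠ {x : F | ∃ c ∈ K, x = s j' * c})
    (a : Fin ((q + 1) / 2) → Fin q → F)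
    (hpart : ∀ j, ∀ γ : F, ∃! i : Fin q, γ ∈ {x : F | ∃ c ∈ K, x = a j i + s j * c})
    (i₀ : Fin q) (g : Fin ((q + 1) / 2) → Fin q → F → ℝ)
    (hg : ∀ j i, g j i = fun γ =>
      Set.indicator {x : F | ∃ c ∈ K, x = a j i + s j * c} (fun _ => (q : ℝ)) γ - 1) :
    LinearIndependent ℝ (fun p : Fin ((q + 1) / 2) × {i : Fin q // i ≠ i₀} => g p.1 p.2) ∧
    Submodule.span ℝ
        (Set.range (fun p : Fin ((q + 1) / 2) × {i : Fin q // i ≠ i₀} => g p.1 p.2)) =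
      Module.End.eigenspace (Matrix.toLin' (G.adjMatrix ℝ)) ((-1 + (q : ℝ)) / 2) := by
  have hFK : Fintype.card F = Nat.card K ^ 2 := hK ▸ hF
  obtain ⟨t, ht⟩ := hodd
  have hn : Fintype.card (Fin ((q + 1) / 2)) = t + 1 := by rw [Fintype.card_fin]; omega
  have hq : 1 < q := hK ▸ Finite.one_lt_card
  choose ℓ hℓ using hpart
  have hmem (j x i) : ℓ j x = i ↔ x ∈ {x : F | ∃ c ∈ K, x = a j i + s j * c} :=
    ⟨fun h ↦ h ▸ (hℓ j x).1, fun h ↦ ((hℓ j x).2 i h).symm⟩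
  have hnet : IsNet ℓ := isNet_of_mem_line_iff hFK hK (fun j ↦ (hs j).1) hdist hmem
  have hadj := adj_iff_of_mem_line_iff hG (fun z hz ↦ K.isSquare_iff_exists_mem_direction hFK
    (hK ▸ ⟨t, ht⟩) (by rw [Nat.card_eq_fintype_card, hn, hK]; omega) hs hdist hz) hmem
  have hgℓ : g = blockFun ℓ := by
    funext j i x
    simp only [hg, blockFun]
    by_cases h : ℓ j x = i
    · rw [if_pos h, Set.indicator_of_mem ((hmem j x i).mp h)]
    · rw [if_neg h, Set.indicator_of_notMem (mt (hmem j x i).mpr h)]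
  have hμ : (-1 + (q : ℝ)) / 2 = q - Fintype.card (Fin ((q + 1) / 2)) := by
    rw [hn, ht]; push_cast; ring
  rw [hgℓ, hμ]
  exact ⟨hnet.linearIndependent_blockFun i₀,
    hnet.span_blockFun_eq_eigenspace hadj (by omega) i₀⟩

/-- For an odd prime power `q`: index the `(q+1)/2` quadratic parallel classes of lines
in `F_{q²}` by nonzero square slopes `s j` spanning pairwise distinct directions, and in
each class let `S_{ji} = a j i + (s j)·F_q` (`i : Fin q`) be the `q` lines partitioning
`F_{q²}`. Dropping the line with a fixed index `i₀` in each class, the `(q²−1)/2` functions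
`g_{ji}` (equal to `q−1` on `S_{ji}` and `−1` elsewhere, `i ≠ i₀`) are linearly
independent and form a basis of the `(−1+q)/2`-eigenspace of the adjacency matrix of
the Paley graph `P(q²)`. -/
theorem paley_eigenspace_basis (q : ℕ) (hq : IsPrimePow q) (hodd : Odd q)
    (F : Type*) [Field F] [Fintype F] [DecidableEq F] (hF : Fintype.card F = q ^ 2)
    (G : SimpleGraph F) [DecidableRel G.Adj]
    (hG : ∀ x y : F, G.Adj x y ↔ x ≠ y ∧ IsSquare (x - y))
    (K : Subfield F) (hK : Nat.card K = q)
    (s : Fin ((q + 1) / 2) → F) (hs : ∀ j, s j ≠ 0 ∧ IsSquare (s j))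
    (hdist : ∀ j j', j ≠ j' →
      {x : F | ∃ c ∈ K, x = s j * c} ≠ {x : F | ∃ c ∈ K, x = s j' * c})
    (a : Fin ((q + 1) / 2) → Fin q → F)
    (hpart : ∀ j, ∀ γ : F, ∃! i : Fin q, γ ∈ {x : F | ∃ c ∈ K, x = a j i + s j * c})
    (i₀ : Fin q) (g : Fin ((q + 1) / 2) → Fin q → F → ℝ)
    (hg : ∀ j i, g j i = fun γ =>
      Set.indicator {x : F | ∃ c ∈ K, x = a j i + s j * c} (fun _ => (q : ℝ)) γ - 1) :
    LinearIndependent ℝ (fun p : Fin ((q + 1) / 2) × {i : Fin q // i ≠ i₀} => g p.1 p.2) ∧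
    Submodule.span ℝ
        (Set.range (fun p : Fin ((q + 1) / 2) × {i : Fin q // i ≠ i₀} => g p.1 p.2)) =
      Module.End.eigenspace (Matrix.toLin' (G.adjMatrix ℝ)) ((-1 + (q : ℝ)) / 2) :=
  paley_eigenspace_basis_general q hodd F hF G hG K hK s hs hdist a hpart i₀ g hg
end
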